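/- arXiv:2205.07498 — 7 statements merged into one kernel-verified Lean document; each statement's English description precedes it below -/
import Mathlib

section
/- Let A be an abelian group and let (G, β) be a flow-critical A-bordered graph. Then G is either 2-connected or isomorphic to K₂. -/
open scoped Classical

section FlowDefs

variable {V : Type} [Fintype V] [DecidableEq V] {A : Type} [AddCommGroup A]

/-- `β` is an `A`-boundary for `G`: its values sum to zero on every connected component. -/
def IsBoundary (G : SimpleGraph V) (β : V → A) : Prop :=
  ∀ x : V, ∑ v ∈ Finset.univ.filter (fun v => G.Reachable v x), β v = 0

/-- `(G, β)` has a nowhere-zero flow: an antisymmetric function on ordered adjacent pairs,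
never zero on edges, whose out-sum at each vertex `u` is `β u`. -/
def HasNZFlow (G : SimpleGraph V) (β : V → A) : Prop :=
  ∃ f : V → V → A,
    (∀ u v, G.Adj u v → f u v = - f v u) ∧
    (∀ u v, G.Adj u v → f u v ≠ 0) ∧
    (∀ u : V, ∑ v ∈ Finset.univ.filter (fun v => G.Adj u v), f u v = β u)

/-- `(G, β)/P` has a nowhere-zero flow, where the partition `P` of `V(G)` is given as a setoid:
an antisymmetric, nowhere-zero function on the ordered adjacent pairs lying in distinct parts,
such that for every part, the sum of the values leaving the part is the sum of `β` on it. -/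
def HasNZFlowQuot (G : SimpleGraph V) (β : V → A) (P : Setoid V) : Prop :=
  ∃ f : V → V → A,
    (∀ u v, G.Adj u v → ¬ P.r u v → f u v = - f v u) ∧
    (∀ u v, G.Adj u v → ¬ P.r u v → f u v ≠ 0) ∧
    (∀ x : V,
      ∑ u ∈ Finset.univ.filter (fun u => P.r u x),
        ∑ v ∈ Finset.univ.filter (fun v => G.Adj u v ∧ ¬ P.r u v), f u v
      = ∑ v ∈ Finset.univ.filter (fun v => P.r v x), β v)

/-- The partition `P` is `G`-connected: every part induces a connected subgraph of `G`. -/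
def PartsConnected (G : SimpleGraph V) (P : Setoid V) : Prop :=
  ∀ x : V, (G.induce {v | P.r v x}).Connected

/-- `(G, β)` is a flow-critical `A`-bordered graph: `β` is an `A`-boundary, `G` is connected,
`(G, β)` has no nowhere-zero flow, but `(G, β)/P` has one for every `G`-connected partition `P`
with at least one part of size at least two. -/
def FlowCritical (G : SimpleGraph V) (β : V → A) : Prop :=
  IsBoundary G β ∧ G.Connected ∧ ¬ HasNZFlow G β ∧
  ∀ P : Setoid V, PartsConnected G P → (∃ x y : V, x ≠ y ∧ P.r x y) →
    HasNZFlowQuot G β P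

end FlowDefs

/-- `G` is 2-connected: at least 3 vertices, connected, and connected after deleting any vertex. -/
def TwoConnected {V : Type} [Fintype V] (G : SimpleGraph V) : Prop :=
  3 ≤ Fintype.card V ∧ G.Connected ∧ ∀ v : V, (G.induce {u | u ≠ v}).Connected


section Aux
set_option linter.unusedSectionVars false
variable {V : Type} [Fintype V] [DecidableEq V] {A : Type} [AddCommGroup A]

def partSetoid (T : Set V) : Setoid V where
  r u w := (u ∈ T ∧ w ∈ T) ∨ u = w
  iseqv := by
    refine ⟨fun _ => Or.inr rfl, ?_, ?_⟩
    · rintro a b (⟨h1, h2⟩ | rfl)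
      · exact Or.inl ⟨h2, h1⟩
      · exact Or.inr rfl
    · rintro a b c (⟨h1, h2⟩ | rfl) (⟨h3, h4⟩ | rfl) <;> tauto

lemma partSetoid_r {T : Set V} {u w : V} :
    (partSetoid T).r u w ↔ (u ∈ T ∧ w ∈ T) ∨ u = w := Iff.rfl

lemma singleton_connected (G : SimpleGraph V) (x : V) : (G.induce {x}).Connected := by
  rw [SimpleGraph.connected_iff]
  refine ⟨?_, ⟨⟨x, rfl⟩⟩⟩
  rintro ⟨a, ha⟩ ⟨b, hb⟩
  have : a = b := by
    simp only [Set.mem_singleton_iff] at ha hb; rw [ha, hb]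
  subst this
  exact SimpleGraph.Reachable.refl _

lemma induce_union_connected (G : SimpleGraph V) (hG : G.Connected) (v : V) (T : Set V)
    (hvT : v ∉ T) (hcl : ∀ x y, x ∈ T → G.Adj x y → y ≠ v → y ∈ T) :
    (G.induce (T ∪ {v})).Connected := by
  have hv : v ∈ T ∪ {v} := Or.inr rfl
  have key : ∀ (u w : V) (p : G.Walk u w), w = v → ∀ hu : u ∈ T,
      (G.induce (T ∪ {v})).Reachable ⟨u, Or.inl hu⟩ ⟨v, hv⟩ := by
    intro u w p
    induction p with
    | nil => rintro rfl hu; exact absurd hu hvT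
    | @cons a b c hab q ih =>
      intro hc hu
      by_cases hb : b = v
      · subst hb
        exact SimpleGraph.Adj.reachable (by simpa using hab)
      · have hbT : b ∈ T := hcl a b hu hab hb
        have hadj : (G.induce (T ∪ {v})).Adj ⟨a, Or.inl hu⟩ ⟨b, Or.inl hbT⟩ := by
          simpa using hab
        exact hadj.reachable.trans (ih hc hbT)
  rw [SimpleGraph.connected_iff]
  refine ⟨?_, ⟨⟨v, hv⟩⟩⟩
  have H : ∀ (x : V) (hx : x ∈ T ∪ {v}), (G.induce (T ∪ {v})).Reachable ⟨x, hx⟩ ⟨v, hv⟩ := by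
    rintro x (hx | hx)
    · exact key x v (hG.preconnected x v).some rfl hx
    · simp only [Set.mem_singleton_iff] at hx
      subst hx
      exact SimpleGraph.Reachable.refl _
  rintro ⟨u, hu⟩ ⟨w, hw⟩
  exact (H u hu).trans (H w hw).symm

lemma partsConnected_partSetoid (G : SimpleGraph V) (T : Set V)
    (hT : (G.induce T).Connected) : PartsConnected G (partSetoid T) := by
  intro x
  by_cases hx : x ∈ T
  · have hset : {u | (partSetoid T).r u x} = T := by
      ext u
      simp only [Set.mem_setOf_eq, partSetoid_r]
      constructor
      · rintro (⟨h1, _⟩ | rfl)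
        · exact h1
        · exact hx
      · intro h; exact Or.inl ⟨h, hx⟩
    rw [hset]; exact hT
  · have hset : {u | (partSetoid T).r u x} = {x} := by
      ext u
      simp only [Set.mem_setOf_eq, partSetoid_r, Set.mem_singleton_iff]
      constructor
      · rintro (⟨_, h2⟩ | rfl)
        · exact absurd h2 hx
        · rfl
      · rintro rfl; exact Or.inr rfl
    rw [hset]; exact singleton_connected G x

lemma no_cutvertex (G : SimpleGraph V) (β : V → A) (hb : IsBoundary G β) (hconn : G.Connected)
    (hquot : ∀ P : Setoid V, PartsConnected G P → (∃ x y : V, x ≠ y ∧ P.r x y) →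
      HasNZFlowQuot G β P)
    (v : V) (hdis : ¬ (G.induce {u | u ≠ v}).Connected) (hcard : 3 ≤ Fintype.card V) :
    HasNZFlow G β := by
  set S : Set V := {u | u ≠ v} with hS
  obtain ⟨a0, ha0⟩ := Fintype.exists_ne_of_one_lt_card (by omega) v
  have hSne : Nonempty ↥S := ⟨⟨a0, ha0⟩⟩
  rw [SimpleGraph.connected_iff] at hdis
  have hpre : ¬ (G.induce S).Preconnected := fun h => hdis ⟨h, hSne⟩
  simp only [SimpleGraph.Preconnected, not_forall] at hpre
  obtain ⟨a, b, hab⟩ := hpre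
  set C : Set V := {u | ∃ h : u ≠ v, (G.induce S).Reachable ⟨u, h⟩ a} with hC
  have haC : (a : V) ∈ C := ⟨a.2, SimpleGraph.Reachable.refl _⟩
  have hvC : v ∉ C := fun h => h.1 rfl
  have hclC : ∀ x y, x ∈ C → G.Adj x y → y ≠ v → y ∈ C := by
    rintro x y ⟨hx, hreach⟩ hadj hy
    refine ⟨hy, ?_⟩
    have hyx : (G.induce S).Adj ⟨y, hy⟩ ⟨x, hx⟩ := by simpa using hadj.symm
    exact hyx.reachable.trans hreach
  set D : Set V := {u | u ≠ v ∧ u ∉ C} with hD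
  have hbD : (b : V) ∈ D := by
    refine ⟨b.2, fun hbC => hab ?_⟩
    obtain ⟨h, hr⟩ := hbC
    exact hr.symm
  have hvD : v ∉ D := fun h => h.1 rfl
  have hclD : ∀ x y, x ∈ D → G.Adj x y → y ≠ v → y ∈ D := by
    rintro x y ⟨hx, hxC⟩ hadj hy
    exact ⟨hy, fun hyC => hxC (hclC y x hyC hadj.symm hx)⟩
  have noedge : ∀ u w, u ∈ C → w ∈ D → ¬ G.Adj u w := by
    rintro u w huC ⟨hw, hwC⟩ hadj
    exact hwC (hclC u w huC hadj hw)
  have hCD : ∀ u, u ∈ C → u ∉ D := fun u hu hd => hd.2 hu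
  have hCv : ∀ u, u ∈ C → u ≠ v := by rintro u ⟨h, _⟩; exact h
  have trich : ∀ u : V, u = v ∨ u ∈ C ∨ u ∈ D := by
    intro u
    by_cases h1 : u = v
    · exact Or.inl h1
    by_cases h2 : u ∈ C
    · exact Or.inr (Or.inl h2)
    · exact Or.inr (Or.inr ⟨h1, h2⟩)
  set T1 : Set V := D ∪ {v} with hT1
  set T2 : Set V := C ∪ {v} with hT2
  have hvT1 : v ∈ T1 := Or.inr rfl
  have hvT2 : v ∈ T2 := Or.inr rfl
  have hP1 : PartsConnected G (partSetoid T1) :=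
    partsConnected_partSetoid G T1 (induce_union_connected G hconn v D hvD hclD)
  have hP2 : PartsConnected G (partSetoid T2) :=
    partsConnected_partSetoid G T2 (induce_union_connected G hconn v C hvC hclC)
  obtain ⟨f₁, h1a, h1n, h1s⟩ := hquot (partSetoid T1) hP1
    ⟨v, b, fun h => b.2 h.symm, Or.inl ⟨hvT1, Or.inl hbD⟩⟩
  obtain ⟨f₂, h2a, h2n, h2s⟩ := hquot (partSetoid T2) hP2
    ⟨v, a, fun h => a.2 h.symm, Or.inl ⟨hvT2, Or.inl haC⟩⟩
  have hCnT1 : ∀ u, u ∈ C → u ∉ T1 := by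
    rintro u hu (hD' | hv')
    · exact hCD u hu hD'
    · exact hCv u hu hv'
  have hDnT2 : ∀ u, u ∈ D → u ∉ T2 := by
    rintro u hu (hC' | hv')
    · exact hu.2 hC'
    · exact hu.1 hv'
  have r1_false : ∀ u w, G.Adj u w → (u ∈ C ∨ w ∈ C) → ¬ (partSetoid T1).r u w := by
    rintro u w hadj hc (⟨h1, h2⟩ | rfl)
    · rcases hc with hc | hc
      · exact hCnT1 u hc h1
      · exact hCnT1 w hc h2
    · exact G.irrefl hadj
  have r2_false : ∀ u w, G.Adj u w → ¬(u ∈ C ∨ w ∈ C) → ¬ (partSetoid T2).r u w := by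
    rintro u w hadj hc (⟨h1, h2⟩ | rfl)
    · push_neg at hc
      rcases h1 with h1 | h1
      · exact hc.1 h1
      · rcases h2 with h2 | h2
        · exact hc.2 h2
        · exact G.ne_of_adj hadj (h1.trans h2.symm)
    · exact G.irrefl hadj
  refine ⟨fun u w => if u ∈ C ∨ w ∈ C then f₁ u w else f₂ u w, ?_, ?_, ?_⟩
  · intro u w hadj
    beta_reduce
    by_cases h : u ∈ C ∨ w ∈ C
    · rw [if_pos h, if_pos (Or.symm h)]
      exact h1a u w hadj (r1_false u w hadj h)
    · rw [if_neg h, if_neg (fun h' => h (Or.symm h'))]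
      exact h2a u w hadj (r2_false u w hadj h)
  · intro u w hadj
    beta_reduce
    by_cases h : u ∈ C ∨ w ∈ C
    · rw [if_pos h]; exact h1n u w hadj (r1_false u w hadj h)
    · rw [if_neg h]; exact h2n u w hadj (r2_false u w hadj h)
  · intro u
    beta_reduce
    rcases trich u with rfl | huC | huD
    · -- u = u : the cut vertex
      rw [← Finset.sum_filter_add_sum_filter_not (Finset.univ.filter fun w => G.Adj u w)
        (fun w => w ∈ C) (fun w => if u ∈ C ∨ w ∈ C then f₁ u w else f₂ u w)]
      have e1 : ∑ w ∈ (Finset.univ.filter fun w => G.Adj u w).filter (fun w => w ∈ C),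
          (if u ∈ C ∨ w ∈ C then f₁ u w else f₂ u w)
          = ∑ w ∈ (Finset.univ.filter fun w => G.Adj u w).filter (fun w => w ∈ C), f₁ u w := by
        apply Finset.sum_congr rfl
        intro w hw
        simp only [Finset.mem_filter] at hw
        rw [if_pos (Or.inr hw.2)]
      have e2 : ∑ w ∈ (Finset.univ.filter fun w => G.Adj u w).filter (fun w => ¬ w ∈ C),
          (if u ∈ C ∨ w ∈ C then f₁ u w else f₂ u w)
          = ∑ w ∈ (Finset.univ.filter fun w => G.Adj u w).filter (fun w => ¬ w ∈ C), f₂ u w := by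
        apply Finset.sum_congr rfl
        intro w hw
        simp only [Finset.mem_filter] at hw
        rw [if_neg (by rintro (h | h); exacts [hvC h, hw.2 h])]
      rw [e1, e2]
      -- compute the f₁ part
      have hf1 : (Finset.univ.filter fun t => (partSetoid T1).r t u)
          = Finset.univ.filter (fun t => t ∈ T1) := by
        ext t
        simp only [Finset.mem_filter, Finset.mem_univ, true_and, partSetoid_r]
        constructor
        · rintro (⟨h1, _⟩ | rfl)
          · exact h1
          · exact hvT1
        · intro h; exact Or.inl ⟨h, hvT1⟩
      have hs1 := h1s u
      rw [hf1] at hs1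
      have hinner1 : ∑ t ∈ Finset.univ.filter (fun t => t ∈ T1),
          (∑ w ∈ Finset.univ.filter fun w => G.Adj t w ∧ ¬ (partSetoid T1).r t w, f₁ t w)
          = ∑ w ∈ Finset.univ.filter (fun w => G.Adj u w ∧ ¬ (partSetoid T1).r u w), f₁ u w := by
        apply Finset.sum_eq_single_of_mem u (by simp [hvT1])
        intro t ht htv
        simp only [Finset.mem_filter, Finset.mem_univ, true_and] at ht
        have htD : t ∈ D := by
          rcases ht with h | h
          · exact h
          · exact absurd h htv
        rw [Finset.filter_false_of_mem, Finset.sum_empty]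
        rintro w _ ⟨hadj, hr⟩
        rcases trich w with rfl | h | h
        · exact hr (Or.inl ⟨Or.inl htD, hvT1⟩)
        · exact noedge w t h htD hadj.symm
        · exact hr (Or.inl ⟨Or.inl htD, Or.inl h⟩)
      have hff1 : (Finset.univ.filter fun w => G.Adj u w ∧ ¬ (partSetoid T1).r u w)
          = (Finset.univ.filter fun w => G.Adj u w).filter (fun w => w ∈ C) := by
        rw [Finset.filter_filter]
        ext w
        simp only [Finset.mem_filter, Finset.mem_univ, true_and]
        constructor
        · rintro ⟨hadj, hr⟩
          refine ⟨hadj, ?_⟩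
          rcases trich w with rfl | h | h
          · exact absurd (Or.inr rfl) hr
          · exact h
          · exact absurd (Or.inl ⟨hvT1, Or.inl h⟩) hr
        · rintro ⟨hadj, hC'⟩
          exact ⟨hadj, r1_false u w hadj (Or.inr hC')⟩
      rw [hinner1, hff1] at hs1
      -- compute the f₂ part
      have hf2 : (Finset.univ.filter fun t => (partSetoid T2).r t u)
          = Finset.univ.filter (fun t => t ∈ T2) := by
        ext t
        simp only [Finset.mem_filter, Finset.mem_univ, true_and, partSetoid_r]
        constructor
        · rintro (⟨h1, _⟩ | rfl)
          · exact h1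
          · exact hvT2
        · intro h; exact Or.inl ⟨h, hvT2⟩
      have hs2 := h2s u
      rw [hf2] at hs2
      have hinner2 : ∑ t ∈ Finset.univ.filter (fun t => t ∈ T2),
          (∑ w ∈ Finset.univ.filter fun w => G.Adj t w ∧ ¬ (partSetoid T2).r t w, f₂ t w)
          = ∑ w ∈ Finset.univ.filter (fun w => G.Adj u w ∧ ¬ (partSetoid T2).r u w), f₂ u w := by
        apply Finset.sum_eq_single_of_mem u (by simp [hvT2])
        intro t ht htv
        simp only [Finset.mem_filter, Finset.mem_univ, true_and] at ht
        have htC : t ∈ C := by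
          rcases ht with h | h
          · exact h
          · exact absurd h htv
        rw [Finset.filter_false_of_mem, Finset.sum_empty]
        rintro w _ ⟨hadj, hr⟩
        rcases trich w with rfl | h | h
        · exact hr (Or.inl ⟨Or.inl htC, hvT2⟩)
        · exact hr (Or.inl ⟨Or.inl htC, Or.inl h⟩)
        · exact noedge t w htC h hadj
      have hff2 : (Finset.univ.filter fun w => G.Adj u w ∧ ¬ (partSetoid T2).r u w)
          = (Finset.univ.filter fun w => G.Adj u w).filter (fun w => ¬ w ∈ C) := by
        rw [Finset.filter_filter]
        ext w
        simp only [Finset.mem_filter, Finset.mem_univ, true_and]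
        constructor
        · rintro ⟨hadj, hr⟩
          exact ⟨hadj, fun hC' => hr (Or.inl ⟨hvT2, Or.inl hC'⟩)⟩
        · rintro ⟨hadj, hC'⟩
          exact ⟨hadj, r2_false u w hadj (by rintro (h | h); exacts [hvC h, hC' h])⟩
      rw [hinner2, hff2] at hs2
      rw [hs1, hs2]
      -- now pure boundary arithmetic
      have hvnotC : u ∉ Finset.univ.filter (fun t => t ∈ C) := by simp [hvC]
      have hvnotD : u ∉ Finset.univ.filter (fun t => t ∈ D) := by simp [hvD]
      have hT1s : Finset.univ.filter (fun t => t ∈ T1)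
          = insert u (Finset.univ.filter fun t => t ∈ D) := by
        ext t
        simp only [Finset.mem_filter, Finset.mem_univ, true_and, Finset.mem_insert, hT1,
          Set.mem_union, Set.mem_singleton_iff]
        tauto
      have hT2s : Finset.univ.filter (fun t => t ∈ T2)
          = insert u (Finset.univ.filter fun t => t ∈ C) := by
        ext t
        simp only [Finset.mem_filter, Finset.mem_univ, true_and, Finset.mem_insert, hT2,
          Set.mem_union, Set.mem_singleton_iff]
        tauto
      rw [hT1s, hT2s, Finset.sum_insert hvnotD, Finset.sum_insert hvnotC]
      have huniv : ∑ t ∈ Finset.univ, β t = 0 := by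
        have hh := hb u
        rwa [Finset.filter_true_of_mem (fun w _ => hconn.preconnected w u)] at hh
      have hsplitCD : (∑ t ∈ Finset.univ.filter (fun t => t ∈ C), β t)
          + ((∑ t ∈ Finset.univ.filter (fun t => t ∈ D), β t) + β u) = 0 := by
        have h1 := Finset.sum_filter_add_sum_filter_not (Finset.univ : Finset V)
          (fun t => t ∈ C) β
        have h2 : (Finset.univ.filter fun t => ¬ t ∈ C)
            = insert u (Finset.univ.filter fun t => t ∈ D) := by
          ext t
          simp only [Finset.mem_filter, Finset.mem_univ, true_and, Finset.mem_insert]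
          constructor
          · intro h
            rcases trich t with rfl | hc | hd
            · exact Or.inl rfl
            · exact absurd hc h
            · exact Or.inr hd
          · rintro (rfl | h)
            · exact hvC
            · exact h.2
        rw [h2, Finset.sum_insert hvnotD] at h1
        rw [huniv] at h1
        rw [← h1]
        abel
      have goal_eq : (β u + ∑ t ∈ Finset.univ.filter (fun t => t ∈ D), β t)
          + (β u + ∑ t ∈ Finset.univ.filter (fun t => t ∈ C), β t)
          = β u + ((∑ t ∈ Finset.univ.filter (fun t => t ∈ C), β t)
            + ((∑ t ∈ Finset.univ.filter (fun t => t ∈ D), β t) + β u)) := by abel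
      rw [goal_eq, hsplitCD, add_zero]
    · -- u ∈ C
      have hfilter : (Finset.univ.filter fun t => (partSetoid T1).r t u) = {u} := by
        ext t
        simp only [Finset.mem_filter, Finset.mem_univ, true_and, Finset.mem_singleton,
          partSetoid_r]
        constructor
        · rintro (⟨_, h2⟩ | rfl)
          · exact absurd h2 (hCnT1 u huC)
          · rfl
        · rintro rfl; exact Or.inr rfl
      have hs := h1s u
      rw [hfilter, Finset.sum_singleton, Finset.sum_singleton] at hs
      have hfe : (Finset.univ.filter fun w => G.Adj u w ∧ ¬ (partSetoid T1).r u w)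
          = Finset.univ.filter fun w => G.Adj u w := by
        ext t
        simp only [Finset.mem_filter, Finset.mem_univ, true_and, and_iff_left_iff_imp]
        intro hadj
        exact r1_false u t hadj (Or.inl huC)
      rw [hfe] at hs
      rw [← hs]
      apply Finset.sum_congr rfl
      intro w _
      rw [if_pos (Or.inl huC)]
    · -- u ∈ D
      have hfilter : (Finset.univ.filter fun t => (partSetoid T2).r t u) = {u} := by
        ext t
        simp only [Finset.mem_filter, Finset.mem_univ, true_and, Finset.mem_singleton,
          partSetoid_r]
        constructor
        · rintro (⟨_, h2⟩ | rfl)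
          · exact absurd h2 (hDnT2 u huD)
          · rfl
        · rintro rfl; exact Or.inr rfl
      have hs := h2s u
      rw [hfilter, Finset.sum_singleton, Finset.sum_singleton] at hs
      have hnotC : ∀ w, G.Adj u w → ¬ (u ∈ C ∨ w ∈ C) := by
        rintro w hadj (h | h)
        · exact huD.2 h
        · exact noedge w u h huD hadj.symm
      have hfe : (Finset.univ.filter fun w => G.Adj u w ∧ ¬ (partSetoid T2).r u w)
          = Finset.univ.filter fun w => G.Adj u w := by
        ext t
        simp only [Finset.mem_filter, Finset.mem_univ, true_and, and_iff_left_iff_imp]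
        intro hadj
        exact r2_false u t hadj (hnotC t hadj)
      rw [hfe] at hs
      rw [← hs]
      apply Finset.sum_congr rfl
      intro w hw
      simp only [Finset.mem_filter] at hw
      rw [if_neg (hnotC w hw.2)]

end Aux

/-- Every flow-critical `A`-bordered graph is 2-connected or isomorphic to `K₂`. -/
theorem flow_critical_two_connected (V A : Type) [Fintype V] [DecidableEq V] [AddCommGroup A]
    (G : SimpleGraph V) (β : V → A) (hcrit : FlowCritical G β) :
    TwoConnected G ∨ Nonempty (G ≃g (⊤ : SimpleGraph (Fin 2))) := by
  obtain ⟨hb, hconn, hno, hquot⟩ := hcrit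
  have hne : Nonempty V := hconn.nonempty
  have hpos : 0 < Fintype.card V := Fintype.card_pos
  rcases le_or_gt 3 (Fintype.card V) with hge | hlt
  · left
    refine ⟨hge, hconn, fun v => ?_⟩
    by_contra hdis
    exact hno (no_cutvertex G β hb hconn hquot v hdis hge)
  · have h12 : Fintype.card V = 1 ∨ Fintype.card V = 2 := by omega
    rcases h12 with h1 | h2
    · -- card 1 : contradiction, the zero flow works
      exfalso
      apply hno
      have hsub : Subsingleton V := Fintype.card_le_one_iff_subsingleton.mp (by omega)
      refine ⟨fun _ _ => 0, by intro u w _; rw [neg_zero], ?_, ?_⟩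
      · intro u w hadj
        exact absurd (Subsingleton.elim u w) (G.ne_of_adj hadj)
      · intro u
        beta_reduce
        rw [Finset.sum_const_zero]
        have huniv := hb u
        rw [Finset.filter_true_of_mem (fun w _ => hconn.preconnected w u)] at huniv
        have hsum : ∑ t ∈ Finset.univ, β t = β u :=
          Finset.sum_eq_single_of_mem u (Finset.mem_univ u)
            (fun t _ ht => absurd (Subsingleton.elim t u) ht)
        rw [hsum] at huniv
        exact huniv.symm
    · -- card 2 : G is K₂
      right
      obtain ⟨x, y, hxy, hcover⟩ : ∃ x y : V, x ≠ y ∧ ∀ z : V, z = x ∨ z = y := by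
        have := h2
        rw [← Finset.card_univ, Finset.card_eq_two] at this
        obtain ⟨x, y, hxy, huniv⟩ := this
        refine ⟨x, y, hxy, fun z => ?_⟩
        have : z ∈ ({x, y} : Finset V) := huniv ▸ Finset.mem_univ z
        simpa using this
      have hadjxy : G.Adj x y := by
        obtain ⟨p⟩ := hconn.preconnected x y
        cases p with
        | nil => exact absurd rfl hxy
        | @cons _ c _ h q =>
          rcases hcover c with rfl | rfl
          · exact absurd rfl (G.ne_of_adj h)
          · exact h
      have hadj : ∀ u w : V, G.Adj u w ↔ u ≠ w := by
        intro u w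
        constructor
        · exact G.ne_of_adj
        · intro huw
          rcases hcover u with rfl | rfl <;> rcases hcover w with rfl | rfl
          · exact absurd rfl huw
          · exact hadjxy
          · exact hadjxy.symm
          · exact absurd rfl huw
      let e : V ≃ Fin 2 := Fintype.equivFinOfCardEq h2
      refine ⟨{ toEquiv := e, map_rel_iff' := ?_ }⟩
      intro a b
      simp only [SimpleGraph.top_adj, ne_eq, EmbeddingLike.apply_eq_iff_eq, hadj]
end

section
/- Let A be an abelian group and let (G, β) be a flow-critical A-bordered graph. Then for every edge e ∈ E(G), the A-bordered graph (G − e, β) has a nowhere-zero flow. -/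
open scoped Classical

/-!
Contract the edge `e = xy`: the partition whose only nontrivial part is `{x, y}` is
`G`-connected, so `(G, β)/P` has a nowhere-zero flow. Such a flow is a nowhere-zero flow of
`G − e` whose boundary agrees with `β` except for a defect `-d` at `x` and `+d` at `y`.
If `d = 0` it is the required flow; otherwise sending `d` from `x` to `y` along `e` yields a
nowhere-zero flow of `(G, β)`, which criticality forbids.
-/

section PairSetoid

open Finset SimpleGraph

variable {V : Type}

def pairSetoid (x y : V) : Setoid V where
  r u v := u = v ∨ s(u, v) = s(x, y)
  iseqv := by
    refine ⟨fun _ => Or.inl rfl, ?_, ?_⟩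
    · rintro u v (rfl | h)
      · exact Or.inl rfl
      · exact Or.inr (Sym2.eq_swap.trans h)
    · rintro u v w (rfl | huv) (rfl | hvw)
      · exact Or.inl rfl
      · exact Or.inr hvw
      · exact Or.inr huv
      · exact Or.inl (Sym2.congr_right.mp (Sym2.eq_swap.trans (huv.trans hvw.symm)))

section

variable {x y : V}

lemma pairSetoid_r {u v : V} : (pairSetoid x y).r u v ↔ u = v ∨ s(u, v) = s(x, y) := Iff.rfl

lemma pairSetoid_r_iff_of_ne {u v : V} (h : u ≠ v) :
    (pairSetoid x y).r u v ↔ s(u, v) = s(x, y) :=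
  or_iff_right h

lemma setOf_pairSetoid_r_of_mem {z : V} (hz : z = x ∨ z = y) :
    {v | (pairSetoid x y).r v z} = {x, y} := by
  ext v
  simp only [pairSetoid_r, Set.mem_ofPred_eq, Set.mem_insert_iff, Set.mem_singleton_iff,
    Sym2.eq_iff]
  rcases hz with rfl | rfl <;> tauto

lemma setOf_pairSetoid_r_of_ne {z : V} (hx : z ≠ x) (hy : z ≠ y) :
    {v | (pairSetoid x y).r v z} = {z} := by
  ext v
  simp only [pairSetoid_r, Set.mem_ofPred_eq, Set.mem_singleton_iff, Sym2.eq_iff]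
  tauto

lemma filter_pairSetoid_r_left [Fintype V] [DecidableEq V] :
    univ.filter (fun v => (pairSetoid x y).r v x) = {x, y} := by
  rw [← coe_inj, coe_filter_univ, setOf_pairSetoid_r_of_mem (Or.inl rfl), coe_pair]

lemma filter_pairSetoid_r_of_ne [Fintype V] {z : V} (hx : z ≠ x) (hy : z ≠ y) :
    univ.filter (fun v => (pairSetoid x y).r v z) = {z} := by
  rw [← coe_inj, coe_filter_univ, setOf_pairSetoid_r_of_ne hx hy, coe_singleton]

end

lemma partsConnected_pairSetoid {G : SimpleGraph V} {x y : V} (h : G.Adj x y) :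
    PartsConnected G (pairSetoid x y) := by
  intro z
  by_cases hz : z = x ∨ z = y
  · rw [setOf_pairSetoid_r_of_mem hz]
    exact induce_pair_connected_of_adj h
  · rw [not_or] at hz
    rw [setOf_pairSetoid_r_of_ne hz.1 hz.2, induce_singleton_eq_top]
    exact connected_top

end PairSetoid

section Flows

open Finset SimpleGraph

variable {V A : Type}

lemma deleteEdges_singleton_adj_iff_of_ne {G : SimpleGraph V} {x y u v : V}
    (hx : u ≠ x) (hy : u ≠ y) : (G.deleteEdges {s(x, y)}).Adj u v ↔ G.Adj u v := by
  simp only [deleteEdges_adj, Set.mem_singleton_iff, Sym2.eq_iff, and_iff_left_iff_imp]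
  tauto

variable [Fintype V] [DecidableEq V] [AddCommGroup A]

def IsNZFlow (G : SimpleGraph V) (β : V → A) (f : V → V → A) : Prop :=
  (∀ u v, G.Adj u v → f u v = - f v u) ∧
  (∀ u v, G.Adj u v → f u v ≠ 0) ∧
  (∀ u : V, ∑ v ∈ univ.filter (fun v => G.Adj u v), f u v = β u)

lemma sum_adj_eq_add_sum_adj_deleteEdges {G : SimpleGraph V} {x y : V} (h : G.Adj x y)
    (g : V → A) :
    ∑ v ∈ univ.filter (fun v => G.Adj x v), g v
      = g y + ∑ v ∈ univ.filter (fun v => (G.deleteEdges {s(x, y)}).Adj x v), g v := by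
  have hfilter : univ.filter (fun v => G.Adj x v)
      = insert y (univ.filter (fun v => (G.deleteEdges {s(x, y)}).Adj x v)) := by
    ext v
    by_cases hv : v = y <;> simp [hv, h, h.ne]
  rw [hfilter, sum_insert (by simp)]

lemma IsNZFlow.extend_deleteEdges {G : SimpleGraph V} {β : V → A} {x y : V} {d : A}
    {f : V → V → A}
    (hf : IsNZFlow (G.deleteEdges {s(x, y)}) (β - Pi.single x d + Pi.single y d) f)
    (h : G.Adj x y) (hd : d ≠ 0) : HasNZFlow G β := by
  set g : V → V → A := fun u v =>
    if u = x ∧ v = y then d else if u = y ∧ v = x then -d else f u v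
  have hxy : x ≠ y := h.ne
  have hg : ∀ u v, (G.deleteEdges {s(x, y)}).Adj u v → g u v = f u v := by
    intro u v huv
    have hne : s(u, v) ≠ s(x, y) := (deleteEdges_adj.mp huv).2
    rw [Ne, Sym2.eq_iff, not_or] at hne
    simp only [g, if_neg hne.1, if_neg hne.2]
  -- `convert` matches the classical `Decidable` instance of `IsNZFlow` to that of `deleteEdges`
  have hsum : ∀ u, ∑ v ∈ univ.filter (fun v => (G.deleteEdges {s(x, y)}).Adj u v), g u v
      = (β - Pi.single x d + Pi.single y d : V → A) u := fun u =>
    (sum_congr rfl fun v hv => hg u v (mem_filter.mp hv).2).trans (by convert hf.2.2 u)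
  have hgxy : g x y = d := by simp [g]
  have hgyx : g y x = -d := by simp [g, hxy.symm]
  have hadj : ∀ u v, G.Adj u v →
      (u = x ∧ v = y) ∨ (u = y ∧ v = x) ∨ (G.deleteEdges {s(x, y)}).Adj u v := by
    intro u v huv
    rw [deleteEdges_adj, Set.mem_singleton_iff, Sym2.eq_iff]
    tauto
  refine ⟨g, fun u v huv => ?_, fun u v huv => ?_, fun u => ?_⟩
  · rcases hadj u v huv with ⟨rfl, rfl⟩ | ⟨rfl, rfl⟩ | hH
    · rw [hgxy, hgyx, neg_neg]
    · rw [hgxy, hgyx]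
    · rw [hg u v hH, hg v u hH.symm]
      exact hf.1 u v hH
  · rcases hadj u v huv with ⟨rfl, rfl⟩ | ⟨rfl, rfl⟩ | hH
    · rwa [hgxy]
    · rwa [hgyx, neg_ne_zero]
    · rw [hg u v hH]
      exact hf.2.1 u v hH
  · by_cases hux : u = x
    · subst hux
      rw [sum_adj_eq_add_sum_adj_deleteEdges h, hsum, hgxy]
      simp [hxy]
    by_cases huy : u = y
    · subst huy
      rw [sum_adj_eq_add_sum_adj_deleteEdges h.symm, Sym2.eq_swap, hsum, hgyx]
      simp [hxy]
    · have hfilter : univ.filter (fun v => G.Adj u v)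
          = univ.filter (fun v => (G.deleteEdges {s(x, y)}).Adj u v) :=
        filter_congr fun v _ => (deleteEdges_singleton_adj_iff_of_ne hux huy).symm
      rw [hfilter, hsum]
      simp [hux, huy]

lemma HasNZFlowQuot.exists_isNZFlow_deleteEdges {G : SimpleGraph V} {β : V → A} {x y : V}
    (h : G.Adj x y) (hq : HasNZFlowQuot G β (pairSetoid x y)) :
    ∃ (f : V → V → A) (d : A),
      IsNZFlow (G.deleteEdges {s(x, y)}) (β - Pi.single x d + Pi.single y d) f := by
  obtain ⟨f, hanti, hnz, hcons⟩ := hq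
  have hH : ∀ u v,
      (G.deleteEdges {s(x, y)}).Adj u v ↔ G.Adj u v ∧ ¬ (pairSetoid x y).r u v := fun u v => by
    rw [deleteEdges_adj, Set.mem_singleton_iff]
    exact and_congr_right fun huv => (not_congr (pairSetoid_r_iff_of_ne huv.ne)).symm
  set out : V → A := fun u =>
    ∑ v ∈ univ.filter (fun v => (G.deleteEdges {s(x, y)}).Adj u v), f u v
  have hout : ∀ u,
      ∑ v ∈ univ.filter (fun v => G.Adj u v ∧ ¬ (pairSetoid x y).r u v), f u v = out u :=
    fun u => sum_congr (filter_congr fun v _ => (hH u v).symm) fun _ _ => rfl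
  have hpair : out x + out y = β x + β y := by
    simpa only [filter_pairSetoid_r_left, sum_pair h.ne, hout] using hcons x
  have hsingle : ∀ z, z ≠ x → z ≠ y → out z = β z := fun z hx hy => by
    simpa only [filter_pairSetoid_r_of_ne hx hy, sum_singleton, hout] using hcons z
  refine ⟨f, β x - out x, fun u v huv => hanti u v ((hH u v).1 huv).1 ((hH u v).1 huv).2,
    fun u v huv => hnz u v ((hH u v).1 huv).1 ((hH u v).1 huv).2, fun u => ?_⟩
  refine (show _ = out u by convert rfl).trans ?_
  by_cases hux : u = x
  · subst hux
    simp [h.ne]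
  by_cases huy : u = y
  · subst huy
    rw [eq_sub_of_add_eq' hpair]
    simp only [Pi.add_apply, Pi.sub_apply, Pi.single_eq_of_ne' (Ne.symm hux), Pi.single_eq_same,
      sub_zero]
    abel
  · simp [hsingle u hux huy, hux, huy]

end Flows

/-- If `(G, β)` is flow-critical, then for every edge `e` of `G`, the bordered graph
`(G − e, β)` has a nowhere-zero flow. -/
theorem flow_critical_deleteEdge (V A : Type) [Fintype V] [DecidableEq V] [AddCommGroup A]
    (G : SimpleGraph V) (β : V → A) (hcrit : FlowCritical G β)
    (e : Sym2 V) (he : e ∈ G.edgeSet) :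
    HasNZFlow (G.deleteEdges {e}) β := by
  obtain ⟨-, -, hno, hquot⟩ := hcrit
  induction e using Sym2.ind with
  | _ x y =>
  rw [SimpleGraph.mem_edgeSet] at he
  obtain ⟨f, d, hf⟩ := (hquot _ (partsConnected_pairSetoid he)
    ⟨x, y, he.ne, Or.inr rfl⟩).exists_isNZFlow_deleteEdges he
  by_cases hd : d = 0
  · rw [hd, Pi.single_zero, Pi.single_zero, sub_zero, add_zero] at hf
    exact ⟨f, hf⟩
  · exact absurd (hf.extend_deleteEdges he hd) hno
end

section
/- Let A be an abelian group and let (G, β) be an A-bordered graph with no nowhere-zero flow. Let B ⊆ V(G) be such that the induced subgraph G[B] is connected, and let f be a nowhere-zero flow in (G, β)/B, where /B denotes contraction of the partition consisting of B together with singletons; thus f is defined on the ordered pairs (u, v) with uv ∈ E(G) and not both u, v in B. Define β_f : B → A by β_f(u) = β(u) − ∑_{v ∉ B, uv ∈ E(G)} f(u, v). Then ∑_{u ∈ B} β_f(u) = 0 (so β_f is an A-boundary for the connected graph G[B]), and the A-bordered graph (G[B], β_f) has no nowhere-zero flow. -/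
open scoped Classical

/-- The partition of `V` whose parts are `B` and the singletons outside of `B`. -/
def contractSetoid {V : Type} (B : Set V) : Setoid V where
  r u v := u = v ∨ (u ∈ B ∧ v ∈ B)
  iseqv := by
    refine ⟨fun x => Or.inl rfl, ?_, ?_⟩
    · rintro x y (rfl | h)
      · exact Or.inl rfl
      · exact Or.inr ⟨h.2, h.1⟩
    · rintro x y z (rfl | h1) h2
      · exact h2
      · rcases h2 with rfl | h2
        · exact Or.inr h1
        · exact Or.inr ⟨h1.1, h2.2⟩

/-!
On the edges inside `B` take a nowhere-zero flow `g` of `(G[B], β_f)`, elsewhere the flow `f` of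
`(G, β)/B`. The result is a nowhere-zero flow of `(G, β)`: at a vertex outside `B` the part of
`(G, β)/B` is a singleton, and at `u ∈ B` the value `β_f(u)` is exactly what `β(u)` leaves for the
edges inside `B` once `f` has been sent along the edges leaving `B`. The conservation law of `f` at
the part `B` itself is `∑_{u ∈ B} β_f(u) = 0`.
-/

section ContractSetoid

variable {V : Type} {G : SimpleGraph V} {B : Set V}

theorem not_contractSetoid_r_of_adj {u v : V} (hadj : G.Adj u v) (h : ¬(u ∈ B ∧ v ∈ B)) :
    ¬(contractSetoid B).r u v := by
  rintro (rfl | huv)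
  exacts [G.irrefl hadj, h huv]

variable [Fintype V]

theorem filter_contractSetoid_r_of_mem {x : V} (hx : x ∈ B) :
    Finset.univ.filter (fun v => (contractSetoid B).r v x) = Finset.univ.filter (· ∈ B) := by
  ext v
  simp only [Finset.mem_filter, Finset.mem_univ, true_and]
  exact ⟨by rintro (rfl | h); exacts [hx, h.1], fun hv => Or.inr ⟨hv, hx⟩⟩

theorem filter_contractSetoid_r_of_not_mem {x : V} (hx : x ∉ B) :
    Finset.univ.filter (fun v => (contractSetoid B).r v x) = {x} := by
  ext v
  simp only [Finset.mem_filter, Finset.mem_univ, true_and, Finset.mem_singleton]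
  exact ⟨by rintro (rfl | h); exacts [rfl, absurd h.2 hx], Or.inl⟩

theorem filter_adj_not_contractSetoid_r_of_mem {u : V} (hu : u ∈ B) :
    Finset.univ.filter (fun v => G.Adj u v ∧ ¬(contractSetoid B).r u v) =
      Finset.univ.filter (fun v => v ∉ B ∧ G.Adj u v) := by
  ext v
  simp only [Finset.mem_filter, Finset.mem_univ, true_and]
  exact ⟨fun ⟨hadj, hr⟩ => ⟨fun hv => hr (Or.inr ⟨hu, hv⟩), hadj⟩,
    fun ⟨hv, hadj⟩ => ⟨hadj, not_contractSetoid_r_of_adj hadj fun h => hv h.2⟩⟩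

theorem filter_adj_not_contractSetoid_r_of_not_mem {u : V} (hu : u ∉ B) :
    Finset.univ.filter (fun v => G.Adj u v ∧ ¬(contractSetoid B).r u v) =
      Finset.univ.filter (fun v => G.Adj u v) := by
  ext v
  simp only [Finset.mem_filter, Finset.mem_univ, true_and, and_iff_left_iff_imp]
  exact fun hadj => not_contractSetoid_r_of_adj hadj fun h => hu h.1

end ContractSetoid

theorem SimpleGraph.sum_adj_eq_sum_induce_adj_add {V A : Type} [Fintype V] [AddCommMonoid A]
    (G : SimpleGraph V) (s : Set V) {u : V} (hu : u ∈ s) (h : V → A) :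
    ∑ v ∈ Finset.univ.filter (fun v => G.Adj u v), h v =
      ∑ w ∈ Finset.univ.filter (fun w : s => (G.induce s).Adj ⟨u, hu⟩ w), h w +
        ∑ v ∈ Finset.univ.filter (fun v => v ∉ s ∧ G.Adj u v), h v := by
  rw [← Finset.sum_filter_add_sum_filter_not _ (· ∈ s), ← Finset.sum_subtype_eq_sum_filter,
    Finset.filter_filter]
  congr 1
  · exact Finset.sum_congr (by ext; simp) fun _ _ => rfl
  · exact Finset.sum_congr (by ext; simp [and_comm]) fun _ _ => rfl

section Glue

variable {V A : Type} {B : Set V} {g : B → B → A} {f : V → V → A} {u v : V}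

noncomputable def glueFlow (B : Set V) (g : B → B → A) (f : V → V → A) (u v : V) : A :=
  if h : u ∈ B ∧ v ∈ B then g ⟨u, h.1⟩ ⟨v, h.2⟩ else f u v

theorem glueFlow_of_mem (h : u ∈ B ∧ v ∈ B) : glueFlow B g f u v = g ⟨u, h.1⟩ ⟨v, h.2⟩ :=
  dif_pos h

theorem glueFlow_of_not_mem (h : ¬(u ∈ B ∧ v ∈ B)) : glueFlow B g f u v = f u v :=
  dif_neg h

end Glue

section QuotientFlow

variable {V A : Type} [Fintype V] [AddCommGroup A] {G : SimpleGraph V} {β : V → A} {B : Set V}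
  {f : V → V → A}

theorem sum_adj_eq_of_not_mem
    (hflow : ∀ x : V,
      ∑ u ∈ Finset.univ.filter (fun u => (contractSetoid B).r u x),
        ∑ v ∈ Finset.univ.filter (fun v => G.Adj u v ∧ ¬ (contractSetoid B).r u v), f u v
      = ∑ v ∈ Finset.univ.filter (fun v => (contractSetoid B).r v x), β v)
    {x : V} (hx : x ∉ B) :
    ∑ v ∈ Finset.univ.filter (fun v => G.Adj x v), f x v = β x := by
  simpa [filter_contractSetoid_r_of_not_mem hx, filter_adj_not_contractSetoid_r_of_not_mem hx]
    using hflow x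

theorem sum_sub_sum_not_mem_adj_eq_zero
    (hflow : ∀ x : V,
      ∑ u ∈ Finset.univ.filter (fun u => (contractSetoid B).r u x),
        ∑ v ∈ Finset.univ.filter (fun v => G.Adj u v ∧ ¬ (contractSetoid B).r u v), f u v
      = ∑ v ∈ Finset.univ.filter (fun v => (contractSetoid B).r v x), β v) :
    ∑ u ∈ Finset.univ.filter (· ∈ B),
      (β u - ∑ v ∈ Finset.univ.filter (fun v => v ∉ B ∧ G.Adj u v), f u v) = 0 := by
  obtain rfl | ⟨x, hx⟩ := B.eq_empty_or_nonempty
  · simp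
  have h := hflow x
  rw [filter_contractSetoid_r_of_mem hx, Finset.sum_congr rfl fun u hu => by
    rw [filter_adj_not_contractSetoid_r_of_mem (Finset.mem_filter.1 hu).2]] at h
  rw [Finset.sum_sub_distrib, h, sub_self]

theorem hasNZFlow_of_hasNZFlow_induce
    (hanti : ∀ u v, G.Adj u v → ¬(u ∈ B ∧ v ∈ B) → f u v = -f v u)
    (hnz : ∀ u v, G.Adj u v → ¬(u ∈ B ∧ v ∈ B) → f u v ≠ 0)
    (hout : ∀ x ∉ B, ∑ v ∈ Finset.univ.filter (fun v => G.Adj x v), f x v = β x)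
    (hB : HasNZFlow (G.induce B)
      (fun u => β u.1 - ∑ v ∈ Finset.univ.filter (fun v => v ∉ B ∧ G.Adj u.1 v), f u.1 v)) :
    HasNZFlow G β := by
  obtain ⟨g, ganti, gnz, gflow⟩ := hB
  refine ⟨glueFlow B g f, fun u v hadj => ?_, fun u v hadj => ?_, fun u => ?_⟩
  · by_cases h : u ∈ B ∧ v ∈ B
    · rw [glueFlow_of_mem h, glueFlow_of_mem h.symm]
      exact ganti _ _ hadj
    · rw [glueFlow_of_not_mem h, glueFlow_of_not_mem (mt And.symm h)]
      exact hanti u v hadj h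
  · by_cases h : u ∈ B ∧ v ∈ B
    · rw [glueFlow_of_mem h]
      exact gnz _ _ hadj
    · rw [glueFlow_of_not_mem h]
      exact hnz u v hadj h
  by_cases hu : u ∈ B
  · have inside : ∑ w ∈ Finset.univ.filter (fun w : B => (G.induce B).Adj ⟨u, hu⟩ w),
        glueFlow B g f u w = β u - ∑ v ∈ Finset.univ.filter (fun v => v ∉ B ∧ G.Adj u v), f u v :=
      -- the two filters differ only in their instance arguments
      (Finset.sum_congr (by congr) fun w _ => glueFlow_of_mem ⟨hu, w.2⟩).trans (gflow ⟨u, hu⟩)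
    have outside : ∑ v ∈ Finset.univ.filter (fun v => v ∉ B ∧ G.Adj u v), glueFlow B g f u v =
        ∑ v ∈ Finset.univ.filter (fun v => v ∉ B ∧ G.Adj u v), f u v :=
      Finset.sum_congr rfl fun v hv => glueFlow_of_not_mem fun h => (Finset.mem_filter.1 hv).2.1 h.2
    rw [G.sum_adj_eq_sum_induce_adj_add B hu, inside, outside, sub_add_cancel]
  · rw [Finset.sum_congr rfl fun v _ => glueFlow_of_not_mem fun h => hu h.1]
    exact hout u hu

end QuotientFlow

theorem restrict_no_nzflow_general (V A : Type) [Fintype V] [AddCommGroup A]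
    (G : SimpleGraph V) (β : V → A)
    (hno : ¬ HasNZFlow G β)
    (B : Set V)
    (f : V → V → A)
    (hanti : ∀ u v, G.Adj u v → ¬ (contractSetoid B).r u v → f u v = - f v u)
    (hnz : ∀ u v, G.Adj u v → ¬ (contractSetoid B).r u v → f u v ≠ 0)
    (hflow : ∀ x : V,
      ∑ u ∈ Finset.univ.filter (fun u => (contractSetoid B).r u x),
        ∑ v ∈ Finset.univ.filter (fun v => G.Adj u v ∧ ¬ (contractSetoid B).r u v), f u v
      = ∑ v ∈ Finset.univ.filter (fun v => (contractSetoid B).r v x), β v) :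
    (∑ u ∈ Finset.univ.filter (fun u => u ∈ B),
        (β u - ∑ v ∈ Finset.univ.filter (fun v => v ∉ B ∧ G.Adj u v), f u v) = 0) ∧
    ¬ HasNZFlow (G.induce B)
        (fun u => β u.1 - ∑ v ∈ Finset.univ.filter (fun v => v ∉ B ∧ G.Adj u.1 v), f u.1 v) :=
  ⟨sum_sub_sum_not_mem_adj_eq_zero hflow, fun hB => hno <|
    hasNZFlow_of_hasNZFlow_induce
      (fun u v hadj h => hanti u v hadj (not_contractSetoid_r_of_adj hadj h))
      (fun u v hadj h => hnz u v hadj (not_contractSetoid_r_of_adj hadj h))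
      (fun _ hx => sum_adj_eq_of_not_mem hflow hx) hB⟩

/-- If `(G, β)` has no nowhere-zero flow, `G[B]` is connected and `f` is a nowhere-zero flow
in `(G, β)/B`, then `β_f(u) = β(u) − ∑_{v ∉ B, uv ∈ E} f(u,v)` sums to zero over `B` and the
bordered graph `(G[B], β_f)` has no nowhere-zero flow. -/
theorem restrict_no_nzflow (V A : Type) [Fintype V] [DecidableEq V] [AddCommGroup A]
    (G : SimpleGraph V) (β : V → A) (hb : IsBoundary G β)
    (hno : ¬ HasNZFlow G β)
    (B : Set V) (hBconn : (G.induce B).Connected)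
    (f : V → V → A)
    (hanti : ∀ u v, G.Adj u v → ¬ (contractSetoid B).r u v → f u v = - f v u)
    (hnz : ∀ u v, G.Adj u v → ¬ (contractSetoid B).r u v → f u v ≠ 0)
    (hflow : ∀ x : V,
      ∑ u ∈ Finset.univ.filter (fun u => (contractSetoid B).r u x),
        ∑ v ∈ Finset.univ.filter (fun v => G.Adj u v ∧ ¬ (contractSetoid B).r u v), f u v
      = ∑ v ∈ Finset.univ.filter (fun v => (contractSetoid B).r v x), β v) :
    (∑ u ∈ Finset.univ.filter (fun u => u ∈ B),
        (β u - ∑ v ∈ Finset.univ.filter (fun v => v ∉ B ∧ G.Adj u v), f u v) = 0) ∧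
    ¬ HasNZFlow (G.induce B)
        (fun u => β u.1 - ∑ v ∈ Finset.univ.filter (fun v => v ∉ B ∧ G.Adj u.1 v), f u.1 v) :=
  restrict_no_nzflow_general V A G β hno B f hanti hnz hflow
end

section
/- Let n ≥ 5 be odd and let G = K_{2,n−2} be the complete bipartite graph with parts {a, b} of size 2 and a part of size n − 2 (so a and b have degree n − 2). Let β be the (ℤ₂ × ℤ₂)-boundary assigning (0,1) to every vertex of G except to a, which receives (0,0). Then the (ℤ₂ × ℤ₂)-bordered graph (G, β) is flow-critical. -/
open scoped Classical

namespace K2mAux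

abbrev A2 := ZMod 2 × ZMod 2

abbrev V2 (m : ℕ) := Fin 2 ⊕ Fin m

abbrev GK (m : ℕ) : SimpleGraph (V2 m) := completeBipartiteGraph (Fin 2) (Fin m)

def βK (m : ℕ) : V2 m → A2 := fun v => if v = Sum.inl 0 then (0, 0) else (0, 1)

lemma add_self_A2 (x : A2) : x + x = 0 := by revert x; decide

lemma neg_eq_A2 (x : A2) : -x = x := by revert x; decide

lemma eq_iff_add_A2 (x y : A2) : x = y ↔ x + y = 0 := by revert x y; decide

lemma zmod2_cases (x : ZMod 2) : x = 0 ∨ x = 1 := by revert x; decide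

lemma odd_cast (m : ℕ) (ho : Odd m) : (m : ZMod 2) = 1 := by
  obtain ⟨k, hk⟩ := ho; subst hk; push_cast; ring_nf
  simp [show ((2 : ZMod 2)) = 0 from rfl]

lemma sum_expand {m : ℕ} {A : Type} [AddCommMonoid A] (f : V2 m → A) (p : V2 m → Prop)
    [DecidablePred p] :
    ∑ v ∈ Finset.univ.filter p, f v
    = (if p (Sum.inl 0) then f (Sum.inl 0) else 0)
      + (if p (Sum.inl 1) then f (Sum.inl 1) else 0)
      + ∑ j : Fin m, (if p (Sum.inr j) then f (Sum.inr j) else 0) := by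
  rw [Finset.sum_filter, Fintype.sum_sum_type, Fin.sum_univ_two, add_assoc]

lemma filter_class_congr {m : ℕ} (P : Setoid (V2 m)) {x y : V2 m} (h : P.r x y) :
    Finset.univ.filter (fun u => P.r u x) = Finset.univ.filter (fun u => P.r u y) := by
  ext u
  simp only [Finset.mem_filter, Finset.mem_univ, true_and]
  exact ⟨fun h' => P.trans h' h, fun h' => P.trans h' (P.symm h)⟩

lemma class_has_left {m : ℕ} (P : Setoid (V2 m))
    (hP : PartsConnected (GK m) P)
    {x y : V2 m} (hxy : x ≠ y) (hr : P.r x y) :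
    ∃ k : Fin 2, P.r (Sum.inl k) x := by
  have hconn := hP x
  have hy : y ∈ {v | P.r v x} := P.symm hr
  have hx : x ∈ {v | P.r v x} := P.refl x
  obtain ⟨w⟩ := hconn.preconnected ⟨y, hy⟩ ⟨x, hx⟩
  cases w with
  | nil => exact absurd rfl hxy
  | @cons _ u _ h p =>
    obtain ⟨u, hu⟩ := u
    have hadj : (GK m).Adj y u := h
    match y, u with
    | Sum.inl k, _ => exact ⟨k, P.symm hr⟩
    | Sum.inr j, Sum.inl k => exact ⟨k, hu⟩
    | Sum.inr j, Sum.inr i => simp at hadj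

def mkF {m : ℕ} (F : Fin 2 → Fin m → A2) : V2 m → V2 m → A2
  | Sum.inl k, Sum.inr j => F k j
  | Sum.inr j, Sum.inl k => F k j
  | _, _ => 0

lemma mkF_symm {m : ℕ} (F : Fin 2 → Fin m → A2) (u v : V2 m) (h : (GK m).Adj u v) :
    mkF F u v = mkF F v u := by
  match u, v with
  | Sum.inl k, Sum.inr j => rfl
  | Sum.inr j, Sum.inl k => rfl
  | Sum.inl _, Sum.inl _ => simp at h
  | Sum.inr _, Sum.inr _ => simp at h

lemma inner_inl {m : ℕ} (P : Setoid (V2 m)) (F : Fin 2 → Fin m → A2) (k : Fin 2) :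
    ∑ v ∈ Finset.univ.filter (fun v => (GK m).Adj (Sum.inl k) v ∧ ¬ P.r (Sum.inl k) v),
        mkF F (Sum.inl k) v
    = ∑ j : Fin m, (if ¬ P.r (Sum.inl k) (Sum.inr j) then F k j else 0) := by
  rw [sum_expand (fun v => mkF F (Sum.inl k) v)
    (fun v => (GK m).Adj (Sum.inl k) v ∧ ¬ P.r (Sum.inl k) v)]
  simp [mkF]

lemma inner_inr {m : ℕ} (P : Setoid (V2 m)) (F : Fin 2 → Fin m → A2) (j : Fin m) :
    ∑ v ∈ Finset.univ.filter (fun v => (GK m).Adj (Sum.inr j) v ∧ ¬ P.r (Sum.inr j) v),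
        mkF F (Sum.inr j) v
    = (if ¬ P.r (Sum.inr j) (Sum.inl 0) then F 0 j else 0)
      + (if ¬ P.r (Sum.inr j) (Sum.inl 1) then F 1 j else 0) := by
  rw [sum_expand (fun v => mkF F (Sum.inr j) v)
    (fun v => (GK m).Adj (Sum.inr j) v ∧ ¬ P.r (Sum.inr j) v)]
  simp [mkF]

lemma class_singleton {m : ℕ} (P : Setoid (V2 m)) (hP : PartsConnected (GK m) P) {j : Fin m}
    (h0 : ¬ P.r (Sum.inr j) (Sum.inl 0)) (h1 : ¬ P.r (Sum.inr j) (Sum.inl 1)) :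
    Finset.univ.filter (fun u => P.r u (Sum.inr j)) = {Sum.inr j} := by
  ext u
  simp only [Finset.mem_filter, Finset.mem_univ, true_and, Finset.mem_singleton]
  constructor
  · intro hu
    rcases u with k | i
    · exfalso
      fin_cases k
      · exact h0 (P.symm hu)
      · exact h1 (P.symm hu)
    · by_contra hne
      obtain ⟨k, hk⟩ := class_has_left P hP hne hu
      have hkj := P.trans hk hu
      fin_cases k
      · exact h0 (P.symm hkj)
      · exact h1 (P.symm hkj)
  · rintro rfl; exact P.refl _

lemma cardsplit (m : ℕ) (s t : Fin m → Prop) (hst : ∀ j, ¬ (s j ∧ t j)) :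
    (Finset.univ.filter (fun j => ¬ s j ∧ ¬ t j)).card
      + (Finset.univ.filter (fun j => t j)).card
      + (Finset.univ.filter (fun j => s j)).card = m := by
  have h1 := Finset.card_filter_add_card_filter_not
    (s := (Finset.univ : Finset (Fin m))) (p := fun j => s j)
  have h2 := Finset.card_filter_add_card_filter_not
    (s := Finset.univ.filter (fun j => ¬ s j)) (p := fun j => t j)
  rw [Finset.filter_filter, Finset.filter_filter] at h2
  have e1 : Finset.univ.filter (fun j => ¬ s j ∧ t j) = Finset.univ.filter (fun j => t j) := by
    apply Finset.filter_congr; intro j _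
    exact ⟨fun h => h.2, fun h => ⟨fun hs => hst j ⟨hs, h⟩, h⟩⟩
  rw [e1] at h2
  rw [Finset.card_univ, Fintype.card_fin] at h1
  omega

lemma connected_GK (m : ℕ) (hm : 0 < m) : (GK m).Connected := by
  rw [SimpleGraph.connected_iff]
  refine ⟨fun u v => ?_, ⟨Sum.inl 0⟩⟩
  have key : ∀ w : V2 m, (GK m).Reachable w (Sum.inl 0) := by
    intro w
    match w with
    | Sum.inl k =>
      have h1 : (GK m).Adj (Sum.inl k) (Sum.inr ⟨0, hm⟩) := by simp
      have h2 : (GK m).Adj (Sum.inr ⟨0, hm⟩) (Sum.inl 0) := by simp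
      exact h1.reachable.trans h2.reachable
    | Sum.inr j => exact (by simp : (GK m).Adj (Sum.inr j) (Sum.inl 0)).reachable
  exact (key u).trans (key v).symm

lemma boundary_GK (m : ℕ) (hm : 0 < m) (ho : Odd m) : IsBoundary (GK m) (βK m) := by
  intro x
  have hconn := connected_GK m hm
  have hfil : Finset.univ.filter (fun v => (GK m).Reachable v x) = Finset.univ := by
    apply Finset.filter_true_of_mem; intro v _; exact hconn.preconnected v x
  rw [hfil, Fintype.sum_sum_type, Fin.sum_univ_two]
  have h1 : ∑ j : Fin m, βK m (Sum.inr j) = (0, (m : ZMod 2)) := by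
    simp [βK, Finset.sum_const, Prod.ext_iff, nsmul_eq_mul]
  rw [h1, odd_cast m ho]
  simp [βK]; decide

lemma noflow_GK (m : ℕ) (ho : Odd m) : ¬ HasNZFlow (GK m) (βK m) := by
  rintro ⟨f, hanti, hnz, hsum⟩
  have h1 : ∀ j : Fin m, (f (Sum.inr j) (Sum.inl 0)).1 = 1 := by
    intro j
    have hs := hsum (Sum.inr j)
    rw [sum_expand] at hs
    simp [βK] at hs
    have key : ∀ x y : A2, x + y = (0, 1) → x ≠ 0 → y ≠ 0 → x.1 = 1 := by decide
    exact key _ _ hs (hnz _ _ (by simp)) (hnz _ _ (by simp))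
  have hs0 := hsum (Sum.inl 0)
  rw [sum_expand] at hs0
  simp [βK] at hs0
  have hone := congrArg Prod.fst hs0
  rw [Prod.fst_sum] at hone
  have heach : ∀ j : Fin m, (f (Sum.inl 0) (Sum.inr j)).1 = 1 := by
    intro j
    rw [hanti _ _ (by simp : (GK m).Adj (Sum.inl 0) (Sum.inr j))]
    have := h1 j
    rw [Prod.fst_neg, this]
    decide
  rw [Finset.sum_congr rfl (fun j _ => heach j)] at hone
  simp [Finset.sum_const, nsmul_eq_mul, odd_cast m ho] at hone

lemma quot_hab (m : ℕ) (ho : Odd m) (P : Setoid (V2 m)) (hP : PartsConnected (GK m) P)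
    (hab : P.r (Sum.inl 0) (Sum.inl 1)) : HasNZFlowQuot (GK m) (βK m) P := by
  set F : Fin 2 → Fin m → A2 := fun k j => if k = 0 then (1, 0) else (1, 1) with hF
  have hts : ∀ j : Fin m, P.r (Sum.inr j) (Sum.inl 1) ↔ P.r (Sum.inr j) (Sum.inl 0) :=
    fun j => ⟨fun h => P.trans h (P.symm hab), fun h => P.trans h hab⟩
  refine ⟨mkF F, fun u v h _ => by rw [neg_eq_A2, mkF_symm F u v h], ?_, ?_⟩
  · intro u v h _
    match u, v with
    | Sum.inl k, Sum.inr j =>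
      rw [mkF]  -- mkF F (inl k)(inr j) = F k j
      fin_cases k <;> simp [hF] <;> decide
    | Sum.inr j, Sum.inl k =>
      rw [mkF]
      fin_cases k <;> simp [hF] <;> decide
    | Sum.inl _, Sum.inl _ => simp at h
    | Sum.inr _, Sum.inr _ => simp at h
  · intro x
    by_cases hx : P.r x (Sum.inl 0)
    · rw [filter_class_congr P hx]
      rw [sum_expand (fun u => ∑ v ∈ Finset.univ.filter
            (fun v => (GK m).Adj u v ∧ ¬ P.r u v), mkF F u v) (fun u => P.r u (Sum.inl 0)),
          sum_expand (βK m) (fun u => P.r u (Sum.inl 0))]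
      rw [inner_inl P F 0, inner_inl P F 1]
      have h00 : P.r (Sum.inl (0:Fin 2)) (Sum.inl (0:Fin 2)) := P.refl _
      have h10 : P.r (Sum.inl (1:Fin 2)) (Sum.inl (0:Fin 2)) := P.symm hab
      rw [if_pos h00, if_pos h10, if_pos h00, if_pos h10]
      have hj : ∀ j : Fin m,
          (if P.r (Sum.inr j) (Sum.inl 0) then ∑ v ∈ Finset.univ.filter
            (fun v => (GK m).Adj (Sum.inr j) v ∧ ¬ P.r (Sum.inr j) v), mkF F (Sum.inr j) v else 0)
          = 0 := by
        intro j
        split_ifs with h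
        · rw [inner_inr P F j]
          rw [if_neg (by simpa using h), if_neg (by simp [hts]; exact h)]
          simp
        · rfl
      rw [Finset.sum_congr rfl (fun j _ => hj j)]
      have hb0 : ∀ j : Fin m, ¬ P.r (Sum.inl 0) (Sum.inr j) ↔ ¬ P.r (Sum.inr j) (Sum.inl 0) :=
        fun j => ⟨fun h h' => h (P.symm h'), fun h h' => h (P.symm h')⟩
      have hb1 : ∀ j : Fin m, ¬ P.r (Sum.inl 1) (Sum.inr j) ↔ ¬ P.r (Sum.inr j) (Sum.inl 0) :=
        fun j => ⟨fun h h' => h (P.symm ((hts j).mpr h')), fun h h' => h ((hts j).mp (P.symm h'))⟩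
      simp only [hb0, hb1, Finset.sum_const_zero, add_zero]
      rw [eq_iff_add_A2]
      have : ∀ j : Fin m,
          ((if ¬ P.r (Sum.inr j) (Sum.inl 0) then F 0 j else 0)
            + (if ¬ P.r (Sum.inr j) (Sum.inl 0) then F 1 j else 0))
            + (if P.r (Sum.inr j) (Sum.inl 0) then βK m (Sum.inr j) else 0) = (0, 1) := by
        intro j
        by_cases h : P.r (Sum.inr j) (Sum.inl 0) <;> simp [h, hF, βK] <;> decide
      calc ∑ j : Fin m, (if ¬ P.r (Sum.inr j) (Sum.inl 0) then F 0 j else 0)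
            + ∑ j : Fin m, (if ¬ P.r (Sum.inr j) (Sum.inl 0) then F 1 j else 0)
            + (βK m (Sum.inl 0) + βK m (Sum.inl 1)
              + ∑ j : Fin m, (if P.r (Sum.inr j) (Sum.inl 0) then βK m (Sum.inr j) else 0))
          = (βK m (Sum.inl 0) + βK m (Sum.inl 1)) + ∑ j : Fin m,
              (((if ¬ P.r (Sum.inr j) (Sum.inl 0) then F 0 j else 0)
               + (if ¬ P.r (Sum.inr j) (Sum.inl 0) then F 1 j else 0))
               + (if P.r (Sum.inr j) (Sum.inl 0) then βK m (Sum.inr j) else 0)) := by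
            rw [Finset.sum_add_distrib, Finset.sum_add_distrib]; abel
        _ = (0, 1) + ∑ j : Fin m, ((0, 1) : A2) := by
            rw [Finset.sum_congr rfl (fun j _ => this j)]
            have h0 : βK m (Sum.inl 0) = (0 : A2) := if_pos rfl
            have h1 : βK m (Sum.inl 1) = ((0,1) : A2) := if_neg (by simp)
            rw [h0, h1, zero_add]
        _ = 0 := by
            rw [Finset.sum_const]
            simp [Finset.card_univ, Prod.ext_iff, nsmul_eq_mul, odd_cast m ho]
            decide
    · rcases x with k | j
      · exfalso
        fin_cases k
        · exact hx (P.refl _)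
        · exact hx (P.symm hab)
      · have h1 : ¬ P.r (Sum.inr j) (Sum.inl 1) := fun h => hx ((hts j).mp h)
        rw [class_singleton P hP hx h1, Finset.sum_singleton]
        rw [inner_inr P F j, if_pos hx, if_pos h1]
        simp [hF, βK]
        decide

lemma quot_of_tau (m : ℕ) (ho : Odd m) (P : Setoid (V2 m)) (hP : PartsConnected (GK m) P)
    (hab : ¬ P.r (Sum.inl 0) (Sum.inl 1)) (τ : Fin m → A2)
    (hτL : ∀ j, ¬ P.r (Sum.inr j) (Sum.inl 0) → ¬ P.r (Sum.inr j) (Sum.inl 1) →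
      τ j = 0 ∨ τ j = (0, 1))
    (hτST : ∀ j, (P.r (Sum.inr j) (Sum.inl 0) ∨ P.r (Sum.inr j) (Sum.inl 1)) → τ j ≠ (0, 1))
    (hτsum : ∑ j, τ j
      = (((Finset.univ.filter (fun j => ¬ P.r (Sum.inr j) (Sum.inl 0) ∧
            ¬ P.r (Sum.inr j) (Sum.inl 1))).card : ZMod 2),
         ((Finset.univ.filter (fun j => P.r (Sum.inr j) (Sum.inl 1))).card : ZMod 2))) :
    HasNZFlowQuot (GK m) (βK m) P := by
  set s : Fin m → Prop := fun j => P.r (Sum.inr j) (Sum.inl 0) with hs_def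
  set t : Fin m → Prop := fun j => P.r (Sum.inr j) (Sum.inl 1) with ht_def
  have hst : ∀ j, ¬ (s j ∧ t j) := fun j ⟨h1, h2⟩ => hab (P.trans (P.symm h1) h2)
  set F : Fin 2 → Fin m → A2 := fun k j =>
    if k = 0 then ((if t j then (0, 1) else (1, 0)) + τ j)
    else ((if s j then (0, 1) else (1, 1)) + τ j) with hF
  have hF0 : ∀ j, F 0 j = (if t j then (0, 1) else (1, 0)) + τ j := fun j => rfl
  have hF1 : ∀ j, F 1 j = (if s j then (0, 1) else (1, 1)) + τ j := by
    intro j; simp [hF]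
  have hnz0 : ∀ j, ¬ s j → F 0 j ≠ 0 := by
    intro j hs
    rw [hF0]
    by_cases h : t j
    · rw [if_pos h]
      have := hτST j (Or.inr h)
      revert this; generalize τ j = x; revert x; decide
    · rw [if_neg h]
      rcases hτL j hs h with h' | h' <;> rw [h'] <;> decide
  have hnz1 : ∀ j, ¬ t j → F 1 j ≠ 0 := by
    intro j ht
    rw [hF1]
    by_cases h : s j
    · rw [if_pos h]
      have := hτST j (Or.inl h)
      revert this; generalize τ j = x; revert x; decide
    · rw [if_neg h]
      rcases hτL j h ht with h' | h' <;> rw [h'] <;> decide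
  refine ⟨mkF F, fun u v h _ => by rw [neg_eq_A2, mkF_symm F u v h], ?_, ?_⟩
  · intro u v h hr
    match u, v with
    | Sum.inl k, Sum.inr j =>
      rw [mkF]
      fin_cases k
      · exact hnz0 j (fun h' => hr (P.symm h'))
      · exact hnz1 j (fun h' => hr (P.symm h'))
    | Sum.inr j, Sum.inl k =>
      rw [mkF]
      fin_cases k
      · exact hnz0 j hr
      · exact hnz1 j hr
    | Sum.inl _, Sum.inl _ => simp at h
    | Sum.inr _, Sum.inr _ => simp at h
  · intro x
    have hb0 : ∀ j : Fin m, ¬ P.r (Sum.inl 0) (Sum.inr j) ↔ ¬ s j :=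
      fun j => ⟨fun h h' => h (P.symm h'), fun h h' => h (P.symm h')⟩
    have hb1 : ∀ j : Fin m, ¬ P.r (Sum.inl 1) (Sum.inr j) ↔ ¬ t j :=
      fun j => ⟨fun h h' => h (P.symm h'), fun h h' => h (P.symm h')⟩
    by_cases hx0 : P.r x (Sum.inl 0)
    · -- class of a
      rw [filter_class_congr P hx0]
      rw [sum_expand (fun u => ∑ v ∈ Finset.univ.filter
            (fun v => (GK m).Adj u v ∧ ¬ P.r u v), mkF F u v) (fun u => P.r u (Sum.inl 0)),
          sum_expand (βK m) (fun u => P.r u (Sum.inl 0))]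
      have h00 : P.r (Sum.inl (0 : Fin 2)) (Sum.inl (0 : Fin 2)) := P.refl _
      rw [if_pos h00, if_pos h00]
      have h10 : ¬ P.r (Sum.inl (1 : Fin 2)) (Sum.inl (0 : Fin 2)) := fun h => hab (P.symm h)
      rw [if_neg h10, if_neg h10]
      rw [inner_inl P F 0]
      simp only [hb0]
      have hj : ∀ j : Fin m,
          (if P.r (Sum.inr j) (Sum.inl 0) then ∑ v ∈ Finset.univ.filter
            (fun v => (GK m).Adj (Sum.inr j) v ∧ ¬ P.r (Sum.inr j) v), mkF F (Sum.inr j) v else 0)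
          = (if s j then F 1 j else 0) := by
        intro j
        split_ifs with h
        · rw [inner_inr P F j]
          have hns : ¬ ¬ s j := fun h' => h' h
          have hnt : ¬ t j := fun h' => hst j ⟨h, h'⟩
          rw [if_neg hns, if_pos hnt, zero_add]
        · rfl
      rw [Finset.sum_congr rfl (fun j _ => hj j)]
      have hβ0 : βK m (Sum.inl 0) = (0 : A2) := if_pos rfl
      have hβr : ∀ j : Fin m, (if P.r (Sum.inr j) (Sum.inl 0) then βK m (Sum.inr j) else 0)
          = (if s j then ((0,1) : A2) else 0) := by
        intro j; split_ifs with h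
        · exact if_neg (by simp)
        · rfl
      rw [Finset.sum_congr rfl (fun j _ => hβr j), hβ0]
      rw [eq_iff_add_A2]
      rw [zero_add, add_zero, zero_add]
      -- goal : ∑ ite(¬s)(F0)0 + ∑ ite(s)(F1)0 + ∑ ite(s)(0,1)0 = 0
      rw [← Finset.sum_add_distrib, ← Finset.sum_add_distrib]
      have hD : ∀ j : Fin m,
          ((if ¬ s j then F 0 j else 0) + (if s j then F 1 j else 0))
            + (if s j then ((0,1) : A2) else 0)
          = τ j + ((if ¬ s j ∧ ¬ t j then ((1,0) : A2) else 0)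
              + (if t j then ((0,1) : A2) else 0)) := by
        intro j
        by_cases h1 : s j
        · have h2 : ¬ t j := fun h' => hst j ⟨h1, h'⟩
          rw [if_neg (fun h => h h1), if_pos h1, if_pos h1, hF1, if_pos h1,
              if_neg (fun h => h.1 h1), if_neg h2, zero_add, add_zero, add_zero]
          rw [add_comm (0,1) (τ j), add_assoc, add_self_A2, add_zero]
        · by_cases h2 : t j
          · rw [if_pos h1, if_neg h1, if_neg h1, hF0, if_pos h2, add_zero, add_zero,
                if_neg (fun h => h.2 h2), if_pos h2, zero_add]
            rw [add_comm (0,1) (τ j)]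
          · rw [if_pos h1, if_neg h1, if_neg h1, hF0, if_neg h2, add_zero, add_zero,
                if_pos ⟨h1, h2⟩, if_neg h2, add_zero]
            rw [add_comm (1,0) (τ j)]
      rw [Finset.sum_congr rfl (fun j _ => hD j)]
      rw [Finset.sum_add_distrib, Finset.sum_add_distrib, hτsum,
          ← Finset.sum_filter, ← Finset.sum_filter, Finset.sum_const, Finset.sum_const]
      have key : ∀ a b : ℕ, (((a : ZMod 2), (b : ZMod 2)) : A2)
          + (a • ((1,0) : A2) + b • ((0,1) : A2)) = 0 := by
        intro a b
        have h2 : ∀ x : ZMod 2, x + x = 0 := by decide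
        simp only [Prod.smul_mk, nsmul_eq_mul, mul_one, mul_zero, Prod.mk_add_mk,
          Prod.mk_eq_zero, add_zero, zero_add]
        exact ⟨h2 a, h2 b⟩
      exact key _ _
    · by_cases hx1 : P.r x (Sum.inl 1)
      · -- class of b
        rw [filter_class_congr P hx1]
        rw [sum_expand (fun u => ∑ v ∈ Finset.univ.filter
              (fun v => (GK m).Adj u v ∧ ¬ P.r u v), mkF F u v) (fun u => P.r u (Sum.inl 1)),
            sum_expand (βK m) (fun u => P.r u (Sum.inl 1))]
        have h11 : P.r (Sum.inl (1 : Fin 2)) (Sum.inl (1 : Fin 2)) := P.refl _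
        rw [if_neg hab, if_pos h11, if_neg hab, if_pos h11]
        rw [inner_inl P F 1]
        simp only [hb1]
        have hj : ∀ j : Fin m,
            (if P.r (Sum.inr j) (Sum.inl 1) then ∑ v ∈ Finset.univ.filter
              (fun v => (GK m).Adj (Sum.inr j) v ∧ ¬ P.r (Sum.inr j) v), mkF F (Sum.inr j) v else 0)
            = (if t j then F 0 j else 0) := by
          intro j
          split_ifs with h
          · rw [inner_inr P F j]
            have hns : ¬ s j := fun h' => hst j ⟨h', h⟩
            have hnt : ¬ ¬ t j := fun h' => h' h
            rw [if_pos hns, if_neg hnt, add_zero]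
          · rfl
        rw [Finset.sum_congr rfl (fun j _ => hj j)]
        have hβ1 : βK m (Sum.inl 1) = ((0, 1) : A2) := if_neg (by simp)
        have hβr : ∀ j : Fin m, (if P.r (Sum.inr j) (Sum.inl 1) then βK m (Sum.inr j) else 0)
            = (if t j then ((0,1) : A2) else 0) := by
          intro j; split_ifs with h
          · exact if_neg (by simp)
          · rfl
        rw [Finset.sum_congr rfl (fun j _ => hβr j), hβ1]
        rw [eq_iff_add_A2]
        rw [zero_add, zero_add]
        -- goal : ∑ ite(¬t)(F1)0 + ∑ ite(t)(F0)0 + ((0,1) + ∑ ite(t)(0,1)0) = 0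
        have hD : ∀ j : Fin m,
            ((if ¬ t j then F 1 j else 0) + (if t j then F 0 j else 0))
              + (if t j then ((0,1) : A2) else 0)
            = τ j + ((if ¬ s j ∧ ¬ t j then ((1,1) : A2) else 0)
                + (if s j then ((0,1) : A2) else 0)) := by
          intro j
          by_cases h2 : t j
          · have h1 : ¬ s j := fun h' => hst j ⟨h', h2⟩
            rw [if_neg (fun h => h h2), if_pos h2, if_pos h2, hF0, if_pos h2,
                if_neg (fun h => h.2 h2), if_neg h1, zero_add, add_zero, add_zero]
            rw [add_comm (0,1) (τ j), add_assoc, add_self_A2, add_zero]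
          · by_cases h1 : s j
            · rw [if_pos h2, if_neg h2, if_neg h2, hF1, if_pos h1, add_zero, add_zero,
                  if_neg (fun h => h.1 h1), if_pos h1, zero_add]
              rw [add_comm (0,1) (τ j)]
            · rw [if_pos h2, if_neg h2, if_neg h2, hF1, if_neg h1, add_zero, add_zero,
                  if_pos ⟨h1, h2⟩, if_neg h1, add_zero]
              rw [add_comm (1,1) (τ j)]
        calc (∑ j : Fin m, (if ¬ t j then F 1 j else 0)) + (∑ j : Fin m, (if t j then F 0 j else 0))
              + (((0,1) : A2) + ∑ j : Fin m, (if t j then ((0,1) : A2) else 0))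
            = ((0,1) : A2) + ∑ j : Fin m,
                (((if ¬ t j then F 1 j else 0) + (if t j then F 0 j else 0))
                  + (if t j then ((0,1) : A2) else 0)) := by
              rw [Finset.sum_add_distrib, Finset.sum_add_distrib]; abel
          _ = ((0,1) : A2) + ∑ j : Fin m,
                (τ j + ((if ¬ s j ∧ ¬ t j then ((1,1) : A2) else 0)
                  + (if s j then ((0,1) : A2) else 0))) := by
              rw [Finset.sum_congr rfl (fun j _ => hD j)]
          _ = 0 := by
              rw [Finset.sum_add_distrib, Finset.sum_add_distrib, hτsum,
                  ← Finset.sum_filter, ← Finset.sum_filter, Finset.sum_const, Finset.sum_const]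
              have hmcast : ((Finset.univ.filter (fun j => ¬ s j ∧ ¬ t j)).card : ZMod 2)
                  + ((Finset.univ.filter (fun j => t j)).card : ZMod 2)
                  + ((Finset.univ.filter (fun j => s j)).card : ZMod 2) = 1 := by
                have hc := cardsplit m s t hst
                have : (((Finset.univ.filter (fun j => ¬ s j ∧ ¬ t j)).card
                    + (Finset.univ.filter (fun j => t j)).card
                    + (Finset.univ.filter (fun j => s j)).card : ℕ) : ZMod 2) = 1 := by
                  rw [hc, odd_cast m ho]
                push_cast at this
                exact this
              have key2 : ∀ a b c : ℕ, ((a : ZMod 2) + (b : ZMod 2) + (c : ZMod 2) = 1) →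
                  ((0,1) : A2) + ((((a : ZMod 2), (b : ZMod 2)) : A2)
                    + (a • ((1,1) : A2) + c • ((0,1) : A2))) = 0 := by
                intro a b c h
                have h2 : ∀ x : ZMod 2, x + x = 0 := by decide
                simp only [Prod.smul_mk, nsmul_eq_mul, mul_one, mul_zero, Prod.mk_add_mk,
                  Prod.mk_eq_zero, add_zero, zero_add]
                constructor
                · exact h2 a
                · have hb : (b : ZMod 2) + ((a : ZMod 2) + (c : ZMod 2)) = 1 := by
                    rw [← h]; ring
                  rw [hb]; decide
              exact key2 _ _ _ hmcast
      · -- singleton class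
        rcases x with k | j
        · exfalso
          fin_cases k
          · exact hx0 (P.refl _)
          · exact hx1 (P.refl _)
        · rw [class_singleton P hP hx0 hx1, Finset.sum_singleton, Finset.sum_singleton]
          rw [inner_inr P F j, if_pos hx0, if_pos hx1]
          rw [hF0, hF1, if_neg (show ¬ t j from hx1), if_neg (show ¬ s j from hx0)]
          rw [add_add_add_comm, add_self_A2, add_zero]
          rw [show βK m (Sum.inr j) = ((0,1) : A2) from if_neg (by simp)]
          decide

lemma quot_nothab (m : ℕ) (hm : 3 ≤ m) (ho : Odd m) (P : Setoid (V2 m))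
    (hP : PartsConnected (GK m) P) (hab : ¬ P.r (Sum.inl 0) (Sum.inl 1))
    (hne : ∃ (j : Fin m) (k : Fin 2), P.r (Sum.inr j) (Sum.inl k)) :
    HasNZFlowQuot (GK m) (βK m) P := by
  obtain ⟨p, kp, hp⟩ := hne
  have hpst : P.r (Sum.inr p) (Sum.inl 0) ∨ P.r (Sum.inr p) (Sum.inl 1) := by
    fin_cases kp
    · exact Or.inl hp
    · exact Or.inr hp
  set Lf : Finset (Fin m) := Finset.univ.filter (fun j => ¬ P.r (Sum.inr j) (Sum.inl 0) ∧
    ¬ P.r (Sum.inr j) (Sum.inl 1)) with hLf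
  set Tf : Finset (Fin m) := Finset.univ.filter (fun j => P.r (Sum.inr j) (Sum.inl 1)) with hTf
  rcases zmod2_cases (Lf.card : ZMod 2) with hδ1 | hδ1
  · rcases zmod2_cases (Tf.card : ZMod 2) with hδ2 | hδ2
    · -- τ = 0
      refine quot_of_tau m ho P hP hab (fun _ => 0) (fun j _ _ => Or.inl rfl)
        (fun j _ => by show (0 : A2) ≠ (0,1); decide) ?_
      rw [Finset.sum_const, smul_zero, hδ1, hδ2]
      rfl
    · -- δ = (0,1)
      by_cases hL0 : Lf.card = 0
      · -- no leaves: two twist points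
        have hall : ∀ j : Fin m, P.r (Sum.inr j) (Sum.inl 0) ∨ P.r (Sum.inr j) (Sum.inl 1) := by
          intro j
          by_contra hc
          push_neg at hc
          have : j ∈ Lf := by rw [hLf]; simp [hc.1, hc.2]
          rw [Finset.card_eq_zero] at hL0
          simp [hL0] at this
        have h01 : (⟨0, by omega⟩ : Fin m) ≠ ⟨1, by omega⟩ := by
          intro h; simpa using congrArg Fin.val h
        refine quot_of_tau m ho P hP hab
          (fun j => (if j = ⟨0, by omega⟩ then ((1,0) : A2) else 0)
            + (if j = ⟨1, by omega⟩ then ((1,1) : A2) else 0)) ?_ ?_ ?_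
        · intro j h0 h1
          exact absurd (hall j) (by push_neg; exact ⟨h0, h1⟩)
        · intro j _
          split_ifs with h1 h2 h2
          · exact absurd (h1 ▸ h2) h01
          · decide
          · decide
          · decide
        · rw [Finset.sum_add_distrib]
          rw [Finset.sum_ite_eq' Finset.univ (⟨0, by omega⟩ : Fin m) (fun _ => ((1,0) : A2)),
              Finset.sum_ite_eq' Finset.univ (⟨1, by omega⟩ : Fin m) (fun _ => ((1,1) : A2))]
          rw [if_pos (Finset.mem_univ _), if_pos (Finset.mem_univ _), hδ1, hδ2]
          decide
      · -- a leaf exists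
        obtain ⟨p0, hp0⟩ := Finset.card_ne_zero.mp hL0
        rw [hLf, Finset.mem_filter] at hp0
        refine quot_of_tau m ho P hP hab
          (fun j => if j = p0 then ((0,1) : A2) else 0) ?_ ?_ ?_
        · intro j h0 h1
          split_ifs with h
          · exact Or.inr rfl
          · exact Or.inl rfl
        · intro j hj
          rw [if_neg ?_]
          · decide
          · rintro rfl
            rcases hj with h | h
            · exact hp0.2.1 h
            · exact hp0.2.2 h
        · rw [Finset.sum_ite_eq' Finset.univ p0 (fun _ => ((0,1) : A2))]
          rw [if_pos (Finset.mem_univ _), hδ1, hδ2]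
  · -- δ1 = 1 : twist at p
    refine quot_of_tau m ho P hP hab
      (fun j => if j = p then ((1 : ZMod 2), (Tf.card : ZMod 2)) else 0) ?_ ?_ ?_
    · intro j h0 h1
      rcases eq_or_ne j p with rfl | hne
      · exact absurd hpst (by push_neg; exact ⟨h0, h1⟩)
      · exact Or.inl (if_neg hne)
    · intro j _
      split_ifs with h
      · intro hc
        have := congrArg Prod.fst hc
        simp at this
      · decide
    · rw [Finset.sum_ite_eq' Finset.univ p (fun _ => (((1 : ZMod 2), (Tf.card : ZMod 2)) : A2))]
      rw [if_pos (Finset.mem_univ _), hδ1]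

theorem main (m : ℕ) (hm : 3 ≤ m) (ho : Odd m) : FlowCritical (GK m) (βK m) := by
  refine ⟨boundary_GK m (by omega) ho, connected_GK m (by omega), noflow_GK m ho, ?_⟩
  intro P hP ⟨x, y, hxy, hr⟩
  by_cases hab : P.r (Sum.inl 0) (Sum.inl 1)
  · exact quot_hab m ho P hP hab
  · refine quot_nothab m hm ho P hP hab ?_
    obtain ⟨k, hk⟩ := class_has_left P hP hxy hr
    match x, y with
    | Sum.inl k1, Sum.inl k2 =>
      exfalso
      have hne12 : k1 ≠ k2 := fun h => hxy (by rw [h])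
      fin_cases k1 <;> fin_cases k2 <;> first
        | exact hne12 rfl
        | exact hab hr
        | exact hab (P.symm hr)
    | Sum.inr j, _ => exact ⟨j, k, P.symm hk⟩
    | Sum.inl k1, Sum.inr j => exact ⟨j, k1, P.symm hr⟩

end K2mAux

/-- For odd `n ≥ 5`, the complete bipartite graph `K_{2,n−2}` with the `ℤ₂ × ℤ₂`-boundary
assigning `(0,1)` to every vertex except one vertex `a` of degree `n − 2`, which gets `(0,0)`,
is flow-critical. -/
theorem completeBipartite_flow_critical (n : ℕ) (hn : 5 ≤ n) (hodd : Odd n) :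
    FlowCritical (completeBipartiteGraph (Fin 2) (Fin (n - 2)))
      (fun v : Fin 2 ⊕ Fin (n - 2) =>
        if v = Sum.inl 0 then ((0, 0) : ZMod 2 × ZMod 2) else (0, 1)) := by
  have h3 : 3 ≤ n - 2 := by omega
  have ho : Odd (n - 2) := by
    obtain ⟨k, hk⟩ := hodd
    exact ⟨k - 1, by omega⟩
  exact K2mAux.main (n - 2) h3 ho
end

section
/- For every integer n ≥ 7, the graph K⁺_{3,n−3} obtained from the complete bipartite graph K_{3,n−3} by adding an edge joining two of the three vertices of degree n − 3 is ℤ₃-flow-critical, and it has 3n − 8 edges. -/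
open scoped Classical

/-- `K⁺_{3,n−3}`: the complete bipartite graph `K_{3,n−3}` with an extra edge joining two of
the three vertices of degree `n − 3`. -/
def kThreePlus (n : ℕ) : SimpleGraph (Fin 3 ⊕ Fin (n - 3)) :=
  completeBipartiteGraph (Fin 3) (Fin (n - 3)) ⊔
    SimpleGraph.fromEdgeSet {s(Sum.inl 0, Sum.inl 1)}


/-!
Every vertex `inr w` has degree 3, and three nonzero elements of `ℤ₃` with sum zero are equal, so
a nowhere-zero flow sends one value from `inr w` to each of `inl 0`, `inl 1`, `inl 2`; conservation
at `inl 0` and `inl 2` then forces the value on the edge `inl 0 – inl 1` to vanish.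

Conversely, a nontrivial connected partition has an edge `e` inside some part, and a flow that
vanishes at most on `e` induces a nowhere-zero flow of the quotient. Such a flow exists for every
edge `e`: send a zero-sum row `δ` from one vertex `inr w₀` and constant rows of `±1` from the
other `n - 4 ≥ 2` vertices `inr w`, balanced so that conservation holds; the edge `inl 0 – inl 1`
then carries `δ 0 - δ 2`. A constant `δ` handles `e = inl 0 – inl 1`, and a `δ` vanishing only
at `i` handles `e = inr w₀ – inl i`.
-/

section Flows

variable {V : Type} {A : Type} [AddCommGroup A] {G : SimpleGraph V}

lemma sum_sum_adj_eq_zero_of_antisymm {f : V → V → A} (hf : ∀ u v, G.Adj u v → f u v = -f v u)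
    (s : Finset V) : ∑ u ∈ s, ∑ v ∈ s with G.Adj u v, f u v = 0 := by
  rw [Finset.sum_sigma']
  refine Finset.sum_involution (fun p _ => ⟨p.2, p.1⟩) (fun p hp => ?_) (fun p hp _ => ?_)
    (fun p hp => ?_) (fun p _ => rfl)
  · simp only [Finset.mem_sigma, Finset.mem_filter] at hp
    rw [hf _ _ hp.2.2, neg_add_cancel]
  · simp only [Finset.mem_sigma, Finset.mem_filter] at hp
    intro h
    exact hp.2.2.ne (congrArg Sigma.fst h).symm
  · simp only [Finset.mem_sigma, Finset.mem_filter] at hp ⊢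
    exact ⟨hp.2.1, hp.1, hp.2.2.symm⟩

lemma PartsConnected.exists_adj_rel {P : Setoid V} (hP : PartsConnected G P)
    (h : ∃ x y, x ≠ y ∧ P.r x y) : ∃ u v, G.Adj u v ∧ P.r u v := by
  obtain ⟨x, y, hxy, hr⟩ := h
  have : Nontrivial {v | P.r v y} := ⟨⟨⟨x, hr⟩, ⟨y, P.refl y⟩, by simpa using hxy⟩⟩
  obtain ⟨v, hv⟩ := (hP y).preconnected.exists_adj_of_nontrivial ⟨y, P.refl y⟩
  exact ⟨y, v, hv, P.symm v.2⟩

variable [Fintype V]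

def IsFlow (G : SimpleGraph V) (β : V → A) (f : V → V → A) : Prop :=
  (∀ u v, G.Adj u v → f u v = -f v u) ∧
    ∀ u, ∑ v ∈ Finset.univ.filter (fun v => G.Adj u v), f u v = β u

lemma IsFlow.hasNZFlowQuot {β : V → A} {f : V → V → A} {P : Setoid V} (hf : IsFlow G β f)
    (hnz : ∀ u v, G.Adj u v → ¬ P.r u v → f u v ≠ 0) : HasNZFlowQuot G β P := by
  refine ⟨f, fun u v h _ => hf.1 u v h, hnz, fun x => ?_⟩
  set B := Finset.univ.filter (fun u => P.r u x)
  have hout : ∀ u ∈ B, ∑ v ∈ Finset.univ.filter (fun v => G.Adj u v ∧ ¬ P.r u v), f u v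
      = β u - ∑ v ∈ B with G.Adj u v, f u v := by
    intro u hu
    have huB : ∀ v, P.r u v ↔ v ∈ B := fun v => by
      simp only [B, Finset.mem_filter, Finset.mem_univ, true_and] at hu ⊢
      exact ⟨fun h => P.trans (P.symm h) hu, fun h => P.trans hu (P.symm h)⟩
    rw [eq_sub_iff_add_eq, ← hf.2 u, ← Finset.sum_filter_add_sum_filter_not
      (Finset.univ.filter fun v => G.Adj u v) (P.r u), add_comm]
    congr 1 <;> refine Finset.sum_congr ?_ fun _ _ => rfl <;> ext v <;> simp [huB, and_comm]
  rw [Finset.sum_congr rfl hout, Finset.sum_sub_distrib,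
    sum_sum_adj_eq_zero_of_antisymm hf.1, sub_zero]

theorem flowCritical_of_forall_adj [DecidableEq V] {β : V → A} (hβ : IsBoundary G β)
    (hG : G.Connected) (hno : ¬ HasNZFlow G β)
    (hflow : ∀ u v, G.Adj u v →
      ∃ f, IsFlow G β f ∧ ∀ x y, G.Adj x y → s(x, y) ≠ s(u, v) → f x y ≠ 0) :
    FlowCritical G β := by
  refine ⟨hβ, hG, hno, fun P hP hnt => ?_⟩
  obtain ⟨u, v, huv, hr⟩ := hP.exists_adj_rel hnt
  obtain ⟨f, hf, hnz⟩ := hflow u v huv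
  refine hf.hasNZFlowQuot fun x y hxy hnr => hnz x y hxy fun he => ?_
  rcases Sym2.eq_iff.1 he with ⟨rfl, rfl⟩ | ⟨rfl, rfl⟩
  exacts [hnr hr, hnr (P.symm hr)]

end Flows

lemma ZMod.exists_ne_zero_sum_eq {ι : Type*} (s : Finset ι) (hs : 2 ≤ s.card) (t : ZMod 3) :
    ∃ γ : ι → ZMod 3, (∀ i, γ i ≠ 0) ∧ ∑ i ∈ s, γ i = t := by
  -- a value 2 = 1 + 1 on `T` and 1 elsewhere gives the sum `#s + #T`
  obtain ⟨T, hTs, hT⟩ := Finset.exists_subset_card_eq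
    ((Nat.le_of_lt_succ (t - s.card).val_lt).trans hs)
  refine ⟨fun i => 1 + if i ∈ T then 1 else 0, fun i => by dsimp only; split_ifs <;> decide, ?_⟩
  rw [Finset.sum_add_distrib, Finset.sum_boole, Finset.filter_mem_eq_inter,
    Finset.inter_eq_right.2 hTs, hT]
  simp

lemma ZMod.eq_of_add_add_eq_zero {a b c : ZMod 3} (ha : a ≠ 0) (hb : b ≠ 0) (hc : c ≠ 0)
    (h : a + b + c = 0) : a = b ∧ a = c := by
  revert a b c; decide

section KThreePlus

open Sum

variable {n : ℕ}

@[simp] lemma kThreePlus_adj_inl_inr (i : Fin 3) (w : Fin (n - 3)) :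
    (kThreePlus n).Adj (inl i) (inr w) := by simp [kThreePlus]

@[simp] lemma kThreePlus_adj_inr_inl (i : Fin 3) (w : Fin (n - 3)) :
    (kThreePlus n).Adj (inr w) (inl i) := by simp [kThreePlus]

@[simp] lemma kThreePlus_not_adj_inr_inr (w w' : Fin (n - 3)) :
    ¬ (kThreePlus n).Adj (inr w) (inr w') := by simp [kThreePlus]

@[simp] lemma kThreePlus_adj_inl_inl (i j : Fin 3) :
    (kThreePlus n).Adj (inl i) (inl j) ↔ i = 0 ∧ j = 1 ∨ i = 1 ∧ j = 0 := by
  simp [kThreePlus]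
  omega

lemma kThreePlus_connected (hn : 4 ≤ n) : (kThreePlus n).Connected := by
  have w : Fin (n - 3) := ⟨0, by omega⟩
  have key : ∀ u, (kThreePlus n).Reachable u (inl 0) := by
    rintro (i | w')
    · exact (kThreePlus_adj_inl_inr i w).reachable.trans (kThreePlus_adj_inr_inl 0 w).reachable
    · exact (kThreePlus_adj_inr_inl 0 w').reachable
  exact ⟨fun u v => (key u).trans (key v).symm⟩

lemma kThreePlus_card_edgeSet (n : ℕ) : Nat.card (kThreePlus n).edgeSet = 3 * (n - 3) + 1 := by
  have hdisj : Disjoint (completeBipartiteGraph (Fin 3) (Fin (n - 3))).edgeSet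
      {s(inl 0, inl 1)} := by
    simp
  rw [Nat.card_coe_set_eq, Set.ncard_def, kThreePlus, SimpleGraph.edgeSet_sup,
    SimpleGraph.edgeSet_fromEdgeSet, sdiff_eq_left.2 (by simp), Set.encard_union_eq hdisj,
    SimpleGraph.encard_edgeSet_completeBipartiteGraph]
  simp

lemma kThreePlus_not_hasNZFlow (n : ℕ) : ¬ HasNZFlow (kThreePlus n) (fun _ => (0 : ZMod 3)) := by
  rintro ⟨f, hanti, hnz, hcons⟩
  have hrow : ∀ w, f (inr w) (inl 0) = f (inr w) (inl 2) := fun w => by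
    have h := hcons (inr w)
    simp only [Finset.sum_filter, Fintype.sum_sum_type, kThreePlus_adj_inr_inl,
      kThreePlus_not_adj_inr_inr, if_true, if_false, Fin.sum_univ_three, Finset.sum_const_zero,
      add_zero] at h
    exact (ZMod.eq_of_add_add_eq_zero (hnz _ _ (by simp)) (hnz _ _ (by simp))
      (hnz _ _ (by simp)) h).2
  have h0 := hcons (inl 0)
  have h2 := hcons (inl 2)
  simp +decide only [Finset.sum_filter, Fintype.sum_sum_type,
    kThreePlus_adj_inl_inr, kThreePlus_adj_inl_inl, Fin.sum_univ_three, if_true, if_false,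
    true_and, false_and, or_false, zero_add, add_zero] at h0 h2
  have hsame : ∀ w, f (inl 0) (inr w) = f (inl 2) (inr w) := fun w => by
    rw [hanti _ _ (by simp), hanti (inl 2) _ (by simp), hrow]
  rw [Finset.sum_congr rfl fun w _ => hsame w, h2, add_zero] at h0
  exact hnz _ _ (by simp) h0

def kThreePlusFlow {W A : Type} [AddCommGroup A] (c : W → Fin 3 → A) (z : A) :
    Fin 3 ⊕ W → Fin 3 ⊕ W → A
  | inl i, inl j => if i = 0 ∧ j = 1 then z else if i = 1 ∧ j = 0 then -z else 0
  | inl i, inr w => -c w i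
  | inr w, inl i => c w i
  | inr _, inr _ => 0

lemma isFlow_kThreePlusFlow {A : Type} [AddCommGroup A] {c : Fin (n - 3) → Fin 3 → A} {z : A}
    (hrow : ∀ w, ∑ i, c w i = 0) (h0 : ∑ w, c w 0 = z) (h1 : ∑ w, c w 1 = -z)
    (h2 : ∑ w, c w 2 = 0) : IsFlow (kThreePlus n) (fun _ => 0) (kThreePlusFlow c z) := by
  refine ⟨?_, ?_⟩
  · rintro (i | w) (j | w') h
    · rcases (kThreePlus_adj_inl_inl i j).1 h with ⟨rfl, rfl⟩ | ⟨rfl, rfl⟩ <;>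
        simp +decide [kThreePlusFlow]
    · simp [kThreePlusFlow]
    · simp [kThreePlusFlow]
    · exact absurd h (kThreePlus_not_adj_inr_inr w w')
  · rintro (i | w)
    · fin_cases i <;> simp +decide [Finset.sum_filter, Fintype.sum_sum_type, kThreePlusFlow,
        Finset.sum_neg_distrib, h0, h1, h2]
    · simpa [Finset.sum_filter, Fintype.sum_sum_type, kThreePlusFlow] using hrow w

-- `f` sends `δ i` from `inr w₀` to `inl i`
lemma exists_isFlow_kThreePlus (hn : 6 ≤ n) (w₀ : Fin (n - 3)) (δ : Fin 3 → ZMod 3)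
    (hδ : ∑ i, δ i = 0) :
    ∃ f, IsFlow (kThreePlus n) (fun _ => (0 : ZMod 3)) f ∧
      ∀ x y, (kThreePlus n).Adj x y → f x y = 0 →
        (s(x, y) = s(inl 0, inl 1) ∧ δ 0 = δ 2) ∨ ∃ i, s(x, y) = s(inr w₀, inl i) ∧ δ i = 0 := by
  obtain ⟨γ, hγ, hsum⟩ := ZMod.exists_ne_zero_sum_eq (Finset.univ \ {w₀})
    (by rw [Finset.card_sdiff]; simp; omega) (-δ 2)
  let c : Fin (n - 3) → Fin 3 → ZMod 3 := fun w i => if w = w₀ then δ i else γ w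
  have hc : ∀ w i, c w i = 0 → w = w₀ ∧ δ i = 0 := fun w i h => by
    by_cases hw : w = w₀ <;> simp_all [c]
  have hcol : ∀ i, ∑ w, c w i = δ i - δ 2 := fun i => by
    rw [Finset.sum_eq_add_sum_sdiff_singleton_of_mem (Finset.mem_univ w₀), sub_eq_add_neg,
      ← hsum]
    refine congrArg₂ (· + ·) (if_pos rfl) (Finset.sum_congr rfl fun w hw => if_neg ?_)
    simpa using hw
  have h3 : (3 : ZMod 3) = 0 := by decide
  rw [Fin.sum_univ_three] at hδ
  refine ⟨kThreePlusFlow c (δ 0 - δ 2), isFlow_kThreePlusFlow (fun w => ?_) (hcol 0) ?_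
    (by rw [hcol, sub_self]), ?_⟩
  · by_cases hw : w = w₀
    · simpa [c, hw, Fin.sum_univ_three] using hδ
    · simp only [c, hw, if_false, Finset.sum_const, Finset.card_univ, Fintype.card_fin]
      linear_combination γ w * h3
  · rw [hcol]
    linear_combination hδ - δ 2 * h3
  · rintro (i | w) (j | w') h hf
    · left
      rcases (kThreePlus_adj_inl_inl i j).1 h with ⟨rfl, rfl⟩ | ⟨rfl, rfl⟩
      · exact ⟨rfl, sub_eq_zero.1 (by simpa [kThreePlusFlow] using hf)⟩
      · exact ⟨Sym2.eq_swap, (sub_eq_zero.1 (by simpa +decide [kThreePlusFlow] using hf)).symm⟩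
    · obtain ⟨rfl, hi⟩ := hc w' i (neg_eq_zero.1 hf)
      exact Or.inr ⟨i, Sym2.eq_swap, hi⟩
    · obtain ⟨rfl, hj⟩ := hc w j hf
      exact Or.inr ⟨j, rfl, hj⟩
    · exact absurd h (kThreePlus_not_adj_inr_inr w w')

lemma exists_isFlow_kThreePlus_ne_zero_off_edge (hn : 6 ≤ n) {u v : Fin 3 ⊕ Fin (n - 3)}
    (huv : (kThreePlus n).Adj u v) :
    ∃ f, IsFlow (kThreePlus n) (fun _ => (0 : ZMod 3)) f ∧
      ∀ x y, (kThreePlus n).Adj x y → s(x, y) ≠ s(u, v) → f x y ≠ 0 := by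
  suffices ∃ (w₀ : Fin (n - 3)) (δ : Fin 3 → ZMod 3), ∑ i, δ i = 0 ∧
      (δ 0 = δ 2 → s(inl 0, inl 1) = s(u, v)) ∧ ∀ i, δ i = 0 → s(inr w₀, inl i) = s(u, v) by
    obtain ⟨w₀, δ, hδ, h02, hδi⟩ := this
    obtain ⟨f, hf, hzero⟩ := exists_isFlow_kThreePlus hn w₀ δ hδ
    refine ⟨f, hf, fun x y hxy hne h0 => hne ?_⟩
    rcases hzero x y hxy h0 with ⟨he, h⟩ | ⟨i, he, h⟩
    · exact he.trans (h02 h)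
    · exact he.trans (hδi i h)
  -- the row `δ j = j - i` vanishes only at `i`, and `δ 0 - δ 2 = 1`
  have spoke : ∀ (i : Fin 3) (w : Fin (n - 3)), ∃ (w₀ : Fin (n - 3)) (δ : Fin 3 → ZMod 3),
      ∑ j, δ j = 0 ∧ (δ 0 = δ 2 → s(inl 0, inl 1) = s(inr w, inl i)) ∧
      ∀ j, δ j = 0 → s(inr w₀, inl j) = s(inr w, inl i) := fun i w => by
    refine ⟨w, fun j => (j.val : ZMod 3) - i.val, by fin_cases i <;> decide,
      fun h => absurd h ?_, fun j hj => ?_⟩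
    · fin_cases i <;> decide
    · fin_cases i <;> fin_cases j <;> first | rfl | exact absurd hj (by decide)
  rcases u with i | w <;> rcases v with j | w'
  · rcases (kThreePlus_adj_inl_inl i j).1 huv with ⟨rfl, rfl⟩ | ⟨rfl, rfl⟩
    · exact ⟨⟨0, by omega⟩, fun _ => 1, by decide, fun _ => rfl, fun _ h => absurd h one_ne_zero⟩
    · exact ⟨⟨0, by omega⟩, fun _ => 1, by decide, fun _ => Sym2.eq_swap,
        fun _ h => absurd h one_ne_zero⟩
  · obtain ⟨w₀, δ, hδ, h02, hδi⟩ := spoke i w'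
    exact ⟨w₀, δ, hδ, fun h => (h02 h).trans Sym2.eq_swap,
      fun j h => (hδi j h).trans Sym2.eq_swap⟩
  · exact spoke j w
  · exact absurd huv (kThreePlus_not_adj_inr_inr w w')

end KThreePlus

/-- For `n ≥ 7`, the graph `K⁺_{3,n−3}` is `ℤ₃`-flow-critical and has `3n − 8` edges. -/
theorem kThreePlus_flow_critical (n : ℕ) (hn : 7 ≤ n) :
    FlowCritical (kThreePlus n) (fun _ => (0 : ZMod 3)) ∧
    (Nat.card (kThreePlus n).edgeSet : ℤ) = 3 * n - 8 := by
  refine ⟨flowCritical_of_forall_adj (fun _ => Finset.sum_const_zero)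
    (kThreePlus_connected (by omega)) (kThreePlus_not_hasNZFlow n)
    fun _ _ huv => exists_isFlow_kThreePlus_ne_zero_off_edge (by omega) huv, ?_⟩
  rw [kThreePlus_card_edgeSet]
  omega
end

section
/- Every 4-Ore graph is 4-critical; that is, every 4-Ore graph has chromatic number 4 and all of its proper subgraphs are 3-colorable. -/
open scoped Classical
attribute [-instance] Classical.propDecidable

/-- The Ore sum of `H₁` and `H₂`: the vertex `z` of `H₁` is split into two vertices, identified
with the ends `x₂`, `y₂` of a deleted edge of `H₂`; each edge `wz` of `H₁` is redirected to
`x₂` or `y₂` according to `s w` (`true` ↦ `x₂`, `false` ↦ `y₂`). -/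
def oreSumGraph {V₁ V₂ : Type} (H₁ : SimpleGraph V₁) (H₂ : SimpleGraph V₂)
    (z : V₁) (x₂ y₂ : V₂) (s : V₁ → Bool) :
    SimpleGraph ({v : V₁ // v ≠ z} ⊕ V₂) :=
  SimpleGraph.fromRel (fun a b =>
    match a, b with
    | Sum.inl a, Sum.inl b => H₁.Adj a.1 b.1
    | Sum.inr a, Sum.inr b => H₂.Adj a b ∧ ¬(a = x₂ ∧ b = y₂) ∧ ¬(a = y₂ ∧ b = x₂)
    | Sum.inl a, Sum.inr b =>
        H₁.Adj a.1 z ∧ ((s a.1 = true ∧ b = x₂) ∨ (s a.1 = false ∧ b = y₂))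
    | Sum.inr _, Sum.inl _ => False)

/-- `H` is an Ore sum of the 2-connected graphs `H₁` and `H₂`: for some choice of the split
vertex `z` of `H₁`, the deleted edge `x₂y₂` of `H₂` and the distribution `s` of the edges at `z`
(leaving neither of the two split vertices isolated), `H` is isomorphic to the resulting graph. -/
def IsOreSum {W V₁ V₂ : Type} [Fintype V₁] [Fintype V₂]
    (H : SimpleGraph W) (H₁ : SimpleGraph V₁) (H₂ : SimpleGraph V₂) : Prop :=
  TwoConnected H₁ ∧ TwoConnected H₂ ∧
  ∃ (z : V₁) (x₂ y₂ : V₂) (s : V₁ → Bool),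
    H₂.Adj x₂ y₂ ∧
    (∃ w, H₁.Adj w z ∧ s w = true) ∧
    (∃ w, H₁.Adj w z ∧ s w = false) ∧
    Nonempty (H ≃g oreSumGraph H₁ H₂ z x₂ y₂ s)

/-- A graph is `4`-Ore if it can be obtained from copies of `K₄` by repeated Ore sums. -/
inductive IsFourOre : ∀ (V : Type) [Fintype V] [DecidableEq V], SimpleGraph V → Prop
  | k4 (V : Type) [Fintype V] [DecidableEq V] (G : SimpleGraph V)
      (h : Nonempty (G ≃g (⊤ : SimpleGraph (Fin 4)))) : IsFourOre V G
  | ore (V₁ V₂ W : Type) [Fintype V₁] [DecidableEq V₁] [Fintype V₂] [DecidableEq V₂]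
      [Fintype W] [DecidableEq W]
      (H₁ : SimpleGraph V₁) (H₂ : SimpleGraph V₂) (H : SimpleGraph W)
      (h₁ : IsFourOre V₁ H₁) (h₂ : IsFourOre V₂ H₂)
      (h : IsOreSum H H₁ H₂) : IsFourOre W H

/-- `H` is 4-critical: its chromatic number is `4` and every proper subgraph is 3-colorable. -/
def FourCritical {V : Type} [Fintype V] (H : SimpleGraph V) : Prop :=
  H.chromaticNumber = 4 ∧ ∀ H' : H.Subgraph, H' ≠ ⊤ → H'.coe.Colorable 3

lemma two_conn_other {V : Type} [Fintype V] {G : SimpleGraph V} (t2 : TwoConnected G)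
    {x y : V} (hxy : G.Adj x y) : ∃ u, G.Adj u x ∧ u ≠ y := by
  classical
  obtain ⟨hcard, -, hdel⟩ := t2
  have hconn := hdel y
  have hx : x ∈ {u | u ≠ y} := hxy.ne
  -- the subtype has at least 2 elements
  have hcard2 : 1 < Fintype.card {u : V // u ≠ y} := by
    have : Fintype.card {u : V // u ≠ y} = Fintype.card V - 1 := by
      simp [Fintype.card_subtype_compl]
    omega
  have : ∃ w : {u : V // u ∈ {u | u ≠ y}}, w ≠ ⟨x, hx⟩ := by
    exact Fintype.exists_ne_of_one_lt_card (by simpa using hcard2) _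
  obtain ⟨w, hw⟩ := this
  obtain ⟨p⟩ := hconn.preconnected ⟨x, hx⟩ w
  rcases p with _ | @⟨_, u, _, h, q⟩
  · exact absurd rfl hw.symm
  · refine ⟨u.1, ?_, u.2⟩
    have h2 : G.Adj x u.1 := h
    exact h2.symm


def Good {V : Type} (G : SimpleGraph V) : Prop :=
  (¬ ∃ φ : V → Fin 3, ∀ a b, G.Adj a b → φ a ≠ φ b) ∧
  (∀ u v, G.Adj u v → ∃ φ : V → Fin 3, ∀ a b, G.Adj a b →
      ¬(a = u ∧ b = v) → ¬(a = v ∧ b = u) → φ a ≠ φ b) ∧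
  (∀ v, ∃ u, G.Adj u v) ∧
  (∀ (z : V) (c : V → Fin 3), (∃ a b, G.Adj a z ∧ G.Adj b z ∧ c a ≠ c b) →
     ∃ φ : V → Fin 3, (∀ a b, a ≠ z → b ≠ z → G.Adj a b → φ a ≠ φ b) ∧
       ∀ w, G.Adj w z → φ w ≠ c w)

lemma perm1 (a a' : Fin 3) : ∃ σ : Fin 3 → Fin 3, Function.Injective σ ∧ σ a = a' := by
  revert a a'; decide

section OreAdj

variable {V₁ V₂ : Type} (H₁ : SimpleGraph V₁) (H₂ : SimpleGraph V₂)
    (z : V₁) (x₂ y₂ : V₂) (s : V₁ → Bool)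

lemma ore_adj_inl_inl (a b : {v : V₁ // v ≠ z}) :
    (oreSumGraph H₁ H₂ z x₂ y₂ s).Adj (Sum.inl a) (Sum.inl b) ↔ H₁.Adj a.1 b.1 := by
  unfold oreSumGraph
  rw [SimpleGraph.fromRel_adj]
  simp only []
  constructor
  · rintro ⟨_, h | h⟩
    · exact h
    · exact h.symm
  · intro h
    refine ⟨?_, Or.inl h⟩
    intro hab
    exact h.ne (congrArg Subtype.val (Sum.inl.inj hab))

lemma ore_adj_inl_inr (a : {v : V₁ // v ≠ z}) (b : V₂) :
    (oreSumGraph H₁ H₂ z x₂ y₂ s).Adj (Sum.inl a) (Sum.inr b) ↔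
      H₁.Adj a.1 z ∧ ((s a.1 = true ∧ b = x₂) ∨ (s a.1 = false ∧ b = y₂)) := by
  unfold oreSumGraph
  rw [SimpleGraph.fromRel_adj]
  simp only []
  constructor
  · rintro ⟨_, h | h⟩
    · exact h
    · exact h.elim
  · intro h
    exact ⟨by simp, Or.inl h⟩

lemma ore_adj_inr_inl (a : {v : V₁ // v ≠ z}) (b : V₂) :
    (oreSumGraph H₁ H₂ z x₂ y₂ s).Adj (Sum.inr b) (Sum.inl a) ↔
      H₁.Adj a.1 z ∧ ((s a.1 = true ∧ b = x₂) ∨ (s a.1 = false ∧ b = y₂)) := by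
  rw [SimpleGraph.adj_comm]; exact ore_adj_inl_inr H₁ H₂ z x₂ y₂ s a b

lemma ore_adj_inr_inr (a b : V₂) :
    (oreSumGraph H₁ H₂ z x₂ y₂ s).Adj (Sum.inr a) (Sum.inr b) ↔
      H₂.Adj a b ∧ ¬(a = x₂ ∧ b = y₂) ∧ ¬(a = y₂ ∧ b = x₂) := by
  unfold oreSumGraph
  rw [SimpleGraph.fromRel_adj]
  simp only []
  constructor
  · rintro ⟨_, ⟨h, h1, h2⟩ | ⟨h, h1, h2⟩⟩
    · exact ⟨h, h1, h2⟩
    · exact ⟨h.symm, fun hc => h2 ⟨hc.2, hc.1⟩, fun hc => h1 ⟨hc.2, hc.1⟩⟩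
  · rintro ⟨h, h1, h2⟩
    exact ⟨by simpa using h.ne, Or.inl ⟨h, h1, h2⟩⟩

lemma oreSum_swap :
    oreSumGraph H₁ H₂ z x₂ y₂ s = oreSumGraph H₁ H₂ z y₂ x₂ (fun v => !s v) := by
  ext a b
  match a, b with
  | Sum.inl a, Sum.inl b => rw [ore_adj_inl_inl, ore_adj_inl_inl]
  | Sum.inl a, Sum.inr b =>
      rw [ore_adj_inl_inr, ore_adj_inl_inr]
      cases h : s a.1 <;> simp [h]
  | Sum.inr b, Sum.inl a =>
      rw [ore_adj_inr_inl, ore_adj_inr_inl]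
      cases h : s a.1 <;> simp [h]
  | Sum.inr a, Sum.inr b =>
      rw [ore_adj_inr_inr, ore_adj_inr_inr]
      tauto

end OreAdj

section Main
set_option linter.unusedSectionVars false

variable {V₁ V₂ : Type} [Fintype V₁] [Fintype V₂] {H₁ : SimpleGraph V₁} {H₂ : SimpleGraph V₂}
    {z : V₁} {x₂ y₂ : V₂} {s : V₁ → Bool}

/-- a 3-coloring of `H₂ - x₂y₂` giving both `x₂`, `y₂` any prescribed color `γ`. -/
lemma psi_common (g₂ : Good H₂) (hxy : H₂.Adj x₂ y₂) (γ : Fin 3) :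
    ∃ ψ : V₂ → Fin 3, (∀ a b, H₂.Adj a b → ¬(a = x₂ ∧ b = y₂) → ¬(a = y₂ ∧ b = x₂) →
      ψ a ≠ ψ b) ∧ ψ x₂ = γ ∧ ψ y₂ = γ := by
  classical
  obtain ⟨ψ₀, hψ₀⟩ := g₂.2.1 x₂ y₂ hxy
  have heq : ψ₀ x₂ = ψ₀ y₂ := by
    by_contra hne
    apply g₂.1
    refine ⟨ψ₀, fun a b hab => ?_⟩
    by_cases h1 : a = x₂ ∧ b = y₂
    · rw [h1.1, h1.2]; exact hne
    · by_cases h2 : a = y₂ ∧ b = x₂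
      · rw [h2.1, h2.2]; exact Ne.symm hne
      · exact hψ₀ a b hab h1 h2
  obtain ⟨σ, hσi, hσ⟩ := perm1 (ψ₀ x₂) γ
  refine ⟨σ ∘ ψ₀, fun a b hab h1 h2 => fun hc => hψ₀ a b hab h1 h2 (hσi hc), hσ, by
    rw [Function.comp_apply, ← heq]; exact hσ⟩

lemma ore_clause_a (g₁ : Good H₁) (g₂ : Good H₂) :
    ¬ ∃ φ : ({v : V₁ // v ≠ z} ⊕ V₂) → Fin 3,
      ∀ a b, (oreSumGraph H₁ H₂ z x₂ y₂ s).Adj a b → φ a ≠ φ b := by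
  classical
  rintro ⟨φ, hφ⟩
  by_cases h : φ (Sum.inr x₂) = φ (Sum.inr y₂)
  · apply g₁.1
    refine ⟨fun u => if hu : u = z then φ (Sum.inr x₂) else φ (Sum.inl ⟨u, hu⟩), ?_⟩
    intro a b hab
    by_cases haz : a = z
    · by_cases hbz : b = z
      · exact absurd (haz.trans hbz.symm) hab.ne
      · simp only [dif_pos haz, dif_neg hbz]
        have hbz' : H₁.Adj b z := by rw [← haz]; exact hab.symm
        cases hsb : s b with
        | true =>
            exact fun hc => hφ _ _ ((ore_adj_inl_inr H₁ H₂ z x₂ y₂ s ⟨b, hbz⟩ x₂).mpr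
              ⟨hbz', Or.inl ⟨hsb, rfl⟩⟩) hc.symm
        | false =>
            intro hc
            exact hφ _ _ ((ore_adj_inl_inr H₁ H₂ z x₂ y₂ s ⟨b, hbz⟩ y₂).mpr
              ⟨hbz', Or.inr ⟨hsb, rfl⟩⟩) (by rw [← h, ← hc])
    · by_cases hbz : b = z
      · simp only [dif_neg haz, dif_pos hbz]
        have haz' : H₁.Adj a z := by rw [← hbz]; exact hab
        cases hsa : s a with
        | true =>
            exact hφ _ _ ((ore_adj_inl_inr H₁ H₂ z x₂ y₂ s ⟨a, haz⟩ x₂).mpr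
              ⟨haz', Or.inl ⟨hsa, rfl⟩⟩)
        | false =>
            intro hc
            exact hφ _ _ ((ore_adj_inl_inr H₁ H₂ z x₂ y₂ s ⟨a, haz⟩ y₂).mpr
              ⟨haz', Or.inr ⟨hsa, rfl⟩⟩) (by rw [hc, h])
      · simp only [dif_neg haz, dif_neg hbz]
        exact hφ _ _ ((ore_adj_inl_inl H₁ H₂ z x₂ y₂ s ⟨a, haz⟩ ⟨b, hbz⟩).mpr hab)
  · apply g₂.1
    refine ⟨fun u => φ (Sum.inr u), fun a b hab => ?_⟩
    by_cases h1 : a = x₂ ∧ b = y₂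
    · rw [h1.1, h1.2]; exact h
    · by_cases h2 : a = y₂ ∧ b = x₂
      · rw [h2.1, h2.2]; exact fun hc => h hc.symm
      · exact hφ _ _ ((ore_adj_inr_inr H₁ H₂ z x₂ y₂ s a b).mpr ⟨hab, h1, h2⟩)

lemma ore_clause_d (g₁ : Good H₁) (g₂ : Good H₂) (hxy : H₂.Adj x₂ y₂)
    (hwt : ∃ w, H₁.Adj w z ∧ s w = true) (hwf : ∃ w, H₁.Adj w z ∧ s w = false) :
    ∀ v, ∃ u, (oreSumGraph H₁ H₂ z x₂ y₂ s).Adj u v := by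
  classical
  intro v
  match v with
  | Sum.inl a =>
      obtain ⟨u, hu⟩ := g₁.2.2.1 a.1
      by_cases huz : u = z
      · rw [huz] at hu
        have haz : H₁.Adj a.1 z := hu.symm
        cases hsa : s a.1 with
        | true => exact ⟨Sum.inr x₂, (ore_adj_inr_inl H₁ H₂ z x₂ y₂ s a x₂).mpr
            ⟨haz, Or.inl ⟨hsa, rfl⟩⟩⟩
        | false => exact ⟨Sum.inr y₂, (ore_adj_inr_inl H₁ H₂ z x₂ y₂ s a y₂).mpr
            ⟨haz, Or.inr ⟨hsa, rfl⟩⟩⟩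
      · exact ⟨Sum.inl ⟨u, huz⟩, (ore_adj_inl_inl H₁ H₂ z x₂ y₂ s ⟨u, huz⟩ a).mpr hu⟩
  | Sum.inr b =>
      by_cases hbx : b = x₂
      · obtain ⟨w, hw, hs⟩ := hwt
        exact ⟨Sum.inl ⟨w, hw.ne⟩, (ore_adj_inl_inr H₁ H₂ z x₂ y₂ s ⟨w, hw.ne⟩ b).mpr
          ⟨hw, Or.inl ⟨hs, hbx⟩⟩⟩
      · by_cases hby : b = y₂
        · obtain ⟨w, hw, hs⟩ := hwf
          exact ⟨Sum.inl ⟨w, hw.ne⟩, (ore_adj_inl_inr H₁ H₂ z x₂ y₂ s ⟨w, hw.ne⟩ b).mpr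
            ⟨hw, Or.inr ⟨hs, hby⟩⟩⟩
        · obtain ⟨u, hu⟩ := g₂.2.2.1 b
          exact ⟨Sum.inr u, (ore_adj_inr_inr H₁ H₂ z x₂ y₂ s u b).mpr
            ⟨hu, fun hc => hby hc.2, fun hc => hbx hc.2⟩⟩

/-- deleted edge inside `H₁` -/
lemma ore_b_inl_inl (g₁ : Good H₁) (g₂ : Good H₂) (hxy : H₂.Adj x₂ y₂)
    (a b : {v : V₁ // v ≠ z}) (hab : H₁.Adj a.1 b.1) :
    ∃ φ : ({v : V₁ // v ≠ z} ⊕ V₂) → Fin 3, ∀ p q,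
      (oreSumGraph H₁ H₂ z x₂ y₂ s).Adj p q →
      ¬(p = Sum.inl a ∧ q = Sum.inl b) → ¬(p = Sum.inl b ∧ q = Sum.inl a) → φ p ≠ φ q := by
  classical
  obtain ⟨φ₁, hφ₁⟩ := g₁.2.1 a.1 b.1 hab
  obtain ⟨ψ, hψ, hψx, hψy⟩ := psi_common g₂ hxy (φ₁ z)
  refine ⟨Sum.elim (fun p => φ₁ p.1) ψ, ?_⟩
  have cross : ∀ (p : {v : V₁ // v ≠ z}) (t : V₂),
      (oreSumGraph H₁ H₂ z x₂ y₂ s).Adj (Sum.inl p) (Sum.inr t) → φ₁ p.1 ≠ ψ t := by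
    intro p t hadj
    obtain ⟨hpz, hd⟩ := (ore_adj_inl_inr H₁ H₂ z x₂ y₂ s p t).mp hadj
    have ht : ψ t = φ₁ z := by
      rcases hd with ⟨_, rfl⟩ | ⟨_, rfl⟩
      · exact hψx
      · exact hψy
    rw [ht]
    apply hφ₁ p.1 z hpz
    · rintro ⟨-, e2⟩; exact b.2 e2.symm
    · rintro ⟨-, e2⟩; exact a.2 e2.symm
  intro p q hpq h1 h2
  cases p with
  | inl p' =>
      cases q with
      | inl q' =>
          have h' := (ore_adj_inl_inl H₁ H₂ z x₂ y₂ s p' q').mp hpq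
          simp only [Sum.elim_inl]
          apply hφ₁ p'.1 q'.1 h'
          · rintro ⟨e1, e2⟩
            exact h1 ⟨congrArg Sum.inl (Subtype.ext e1), congrArg Sum.inl (Subtype.ext e2)⟩
          · rintro ⟨e1, e2⟩
            exact h2 ⟨congrArg Sum.inl (Subtype.ext e1), congrArg Sum.inl (Subtype.ext e2)⟩
      | inr t =>
          exact cross p' t hpq
  | inr t =>
      cases q with
      | inl q' => exact (cross q' t hpq.symm).symm
      | inr t' =>
          obtain ⟨h', hn1, hn2⟩ := (ore_adj_inr_inr H₁ H₂ z x₂ y₂ s t t').mp hpq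
          exact hψ t t' h' hn1 hn2

/-- deleted edge is a cross edge -/
lemma ore_b_cross (g₁ : Good H₁) (g₂ : Good H₂) (hxy : H₂.Adj x₂ y₂)
    (a : {v : V₁ // v ≠ z}) (t : V₂) (ha : H₁.Adj a.1 z)
    (hd : (s a.1 = true ∧ t = x₂) ∨ (s a.1 = false ∧ t = y₂)) :
    ∃ φ : ({v : V₁ // v ≠ z} ⊕ V₂) → Fin 3, ∀ p q,
      (oreSumGraph H₁ H₂ z x₂ y₂ s).Adj p q →
      ¬(p = Sum.inl a ∧ q = Sum.inr t) → ¬(p = Sum.inr t ∧ q = Sum.inl a) → φ p ≠ φ q := by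
  classical
  obtain ⟨φ₁, hφ₁⟩ := g₁.2.1 a.1 z ha
  obtain ⟨ψ, hψ, hψx, hψy⟩ := psi_common g₂ hxy (φ₁ z)
  refine ⟨Sum.elim (fun p => φ₁ p.1) ψ, ?_⟩
  have cross : ∀ (p : {v : V₁ // v ≠ z}) (t' : V₂),
      (oreSumGraph H₁ H₂ z x₂ y₂ s).Adj (Sum.inl p) (Sum.inr t') →
      ¬(p = a ∧ t' = t) → φ₁ p.1 ≠ ψ t' := by
    intro p t' hadj hcond
    obtain ⟨hpz, hd'⟩ := (ore_adj_inl_inr H₁ H₂ z x₂ y₂ s p t').mp hadj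
    have ht : ψ t' = φ₁ z := by
      rcases hd' with ⟨_, rfl⟩ | ⟨_, rfl⟩
      · exact hψx
      · exact hψy
    rw [ht]
    apply hφ₁ p.1 z hpz
    · rintro ⟨e1, -⟩
      have hpa : p = a := Subtype.ext e1
      apply hcond
      refine ⟨hpa, ?_⟩
      rcases hd with ⟨hs, rfl⟩ | ⟨hs, rfl⟩ <;>
        rcases hd' with ⟨hs', rfl⟩ | ⟨hs', rfl⟩
      · rfl
      · rw [hpa] at hs'; rw [hs] at hs'; exact absurd hs' (by simp)
      · rw [hpa] at hs'; rw [hs] at hs'; exact absurd hs' (by simp)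
      · rfl
    · rintro ⟨e1, -⟩
      exact p.2 e1
  intro p q hpq h1 h2
  cases p with
  | inl p' =>
      cases q with
      | inl q' =>
          have h' := (ore_adj_inl_inl H₁ H₂ z x₂ y₂ s p' q').mp hpq
          simp only [Sum.elim_inl]
          apply hφ₁ p'.1 q'.1 h'
          · rintro ⟨-, e2⟩; exact q'.2 e2
          · rintro ⟨e1, -⟩; exact p'.2 e1
      | inr t' =>
          refine cross p' t' hpq ?_
          rintro ⟨rfl, rfl⟩
          exact h1 ⟨rfl, rfl⟩
  | inr t' =>
      cases q with
      | inl q' =>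
          refine (cross q' t' hpq.symm ?_).symm
          rintro ⟨rfl, rfl⟩
          exact h2 ⟨rfl, rfl⟩
      | inr t'' =>
          obtain ⟨h', hn1, hn2⟩ := (ore_adj_inr_inr H₁ H₂ z x₂ y₂ s t' t'').mp hpq
          exact hψ t' t'' h' hn1 hn2

/-- deleted edge inside `H₂` -/
lemma ore_b_inr_inr (g₁ : Good H₁) (g₂ : Good H₂) (hxy : H₂.Adj x₂ y₂)
    (hwt : ∃ w, H₁.Adj w z ∧ s w = true) (hwf : ∃ w, H₁.Adj w z ∧ s w = false)
    (p₀ q₀ : V₂) (hpq₀ : H₂.Adj p₀ q₀)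
    (hn1₀ : ¬(p₀ = x₂ ∧ q₀ = y₂)) (hn2₀ : ¬(p₀ = y₂ ∧ q₀ = x₂)) :
    ∃ φ : ({v : V₁ // v ≠ z} ⊕ V₂) → Fin 3, ∀ p q,
      (oreSumGraph H₁ H₂ z x₂ y₂ s).Adj p q →
      ¬(p = Sum.inr p₀ ∧ q = Sum.inr q₀) → ¬(p = Sum.inr q₀ ∧ q = Sum.inr p₀) → φ p ≠ φ q := by
  classical
  obtain ⟨ψ, hψ⟩ := g₂.2.1 p₀ q₀ hpq₀
  have hxyψ : ψ x₂ ≠ ψ y₂ := by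
    apply hψ x₂ y₂ hxy
    · rintro ⟨rfl, rfl⟩; exact hn1₀ ⟨rfl, rfl⟩
    · rintro ⟨rfl, rfl⟩; exact hn2₀ ⟨rfl, rfl⟩
  obtain ⟨φ₁, hφ₁, hav₁⟩ := g₁.2.2.2 z (fun w => if s w then ψ x₂ else ψ y₂) (by
    obtain ⟨wt, hwt1, hwt2⟩ := hwt
    obtain ⟨wf, hwf1, hwf2⟩ := hwf
    exact ⟨wt, wf, hwt1, hwf1, by simp [hwt2, hwf2, hxyψ]⟩)
  refine ⟨Sum.elim (fun p => φ₁ p.1) ψ, ?_⟩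
  have cross : ∀ (p : {v : V₁ // v ≠ z}) (t' : V₂),
      (oreSumGraph H₁ H₂ z x₂ y₂ s).Adj (Sum.inl p) (Sum.inr t') → φ₁ p.1 ≠ ψ t' := by
    intro p t' hadj
    obtain ⟨hpz, hd'⟩ := (ore_adj_inl_inr H₁ H₂ z x₂ y₂ s p t').mp hadj
    have := hav₁ p.1 hpz
    rcases hd' with ⟨hs, rfl⟩ | ⟨hs, rfl⟩ <;> simpa [hs] using this
  intro p q hpq h1 h2
  cases p with
  | inl p' =>
      cases q with
      | inl q' =>
          exact hφ₁ p'.1 q'.1 p'.2 q'.2 ((ore_adj_inl_inl H₁ H₂ z x₂ y₂ s p' q').mp hpq)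
      | inr t' => exact cross p' t' hpq
  | inr t' =>
      cases q with
      | inl q' => exact (cross q' t' hpq.symm).symm
      | inr t'' =>
          obtain ⟨h', hn1, hn2⟩ := (ore_adj_inr_inr H₁ H₂ z x₂ y₂ s t' t'').mp hpq
          apply hψ t' t'' h'
          · rintro ⟨rfl, rfl⟩; exact h1 ⟨rfl, rfl⟩
          · rintro ⟨rfl, rfl⟩; exact h2 ⟨rfl, rfl⟩

lemma ore_clause_b (g₁ : Good H₁) (g₂ : Good H₂) (hxy : H₂.Adj x₂ y₂)
    (hwt : ∃ w, H₁.Adj w z ∧ s w = true) (hwf : ∃ w, H₁.Adj w z ∧ s w = false) :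
    ∀ u v, (oreSumGraph H₁ H₂ z x₂ y₂ s).Adj u v →
      ∃ φ : ({v : V₁ // v ≠ z} ⊕ V₂) → Fin 3, ∀ a b,
        (oreSumGraph H₁ H₂ z x₂ y₂ s).Adj a b →
        ¬(a = u ∧ b = v) → ¬(a = v ∧ b = u) → φ a ≠ φ b := by
  classical
  have flip : ∀ u v, (∃ φ : ({v : V₁ // v ≠ z} ⊕ V₂) → Fin 3, ∀ a b,
        (oreSumGraph H₁ H₂ z x₂ y₂ s).Adj a b →
        ¬(a = u ∧ b = v) → ¬(a = v ∧ b = u) → φ a ≠ φ b) →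
      (∃ φ : ({v : V₁ // v ≠ z} ⊕ V₂) → Fin 3, ∀ a b,
        (oreSumGraph H₁ H₂ z x₂ y₂ s).Adj a b →
        ¬(a = v ∧ b = u) → ¬(a = u ∧ b = v) → φ a ≠ φ b) := by
    rintro u v ⟨φ, hφ⟩
    exact ⟨φ, fun a b hab hh1 hh2 => hφ a b hab hh2 hh1⟩
  intro u v huv
  cases u with
  | inl a =>
      cases v with
      | inl b =>
          exact ore_b_inl_inl g₁ g₂ hxy a b ((ore_adj_inl_inl H₁ H₂ z x₂ y₂ s a b).mp huv)
      | inr t =>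
          obtain ⟨ha, hd⟩ := (ore_adj_inl_inr H₁ H₂ z x₂ y₂ s a t).mp huv
          exact ore_b_cross g₁ g₂ hxy a t ha hd
  | inr t =>
      cases v with
      | inl a =>
          obtain ⟨ha, hd⟩ := (ore_adj_inr_inl H₁ H₂ z x₂ y₂ s a t).mp huv
          exact flip _ _ (ore_b_cross g₁ g₂ hxy a t ha hd)
      | inr t' =>
          obtain ⟨h', hn1, hn2⟩ := (ore_adj_inr_inr H₁ H₂ z x₂ y₂ s t t').mp huv
          exact ore_b_inr_inr g₁ g₂ hxy hwt hwf t t' h' hn1 hn2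

/-- property (C) at a split-side vertex -/
lemma ore_C_inl (g₁ : Good H₁) (g₂ : Good H₂) (hxy : H₂.Adj x₂ y₂)
    (v : {v : V₁ // v ≠ z}) (c : ({v : V₁ // v ≠ z} ⊕ V₂) → Fin 3)
    (hc : ∃ α β, (oreSumGraph H₁ H₂ z x₂ y₂ s).Adj α (Sum.inl v) ∧
      (oreSumGraph H₁ H₂ z x₂ y₂ s).Adj β (Sum.inl v) ∧ c α ≠ c β) :
    ∃ φ : ({v : V₁ // v ≠ z} ⊕ V₂) → Fin 3,
      (∀ p q, p ≠ Sum.inl v → q ≠ Sum.inl v →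
        (oreSumGraph H₁ H₂ z x₂ y₂ s).Adj p q → φ p ≠ φ q) ∧
      ∀ w, (oreSumGraph H₁ H₂ z x₂ y₂ s).Adj w (Sum.inl v) → φ w ≠ c w := by
  classical
  set tv : V₂ := if s v.1 then x₂ else y₂ with htv
  set c₁ : V₁ → Fin 3 :=
    fun u => if hu : u = z then c (Sum.inr tv) else c (Sum.inl ⟨u, hu⟩) with hc₁
  have toH1 : ∀ ν, (oreSumGraph H₁ H₂ z x₂ y₂ s).Adj ν (Sum.inl v) →
      ∃ u, H₁.Adj u v.1 ∧ c₁ u = c ν := by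
    intro ν hν
    cases ν with
    | inl u =>
        have h' := (ore_adj_inl_inl H₁ H₂ z x₂ y₂ s u v).mp hν
        exact ⟨u.1, h', by simp [hc₁, u.2]⟩
    | inr p =>
        obtain ⟨hvz, hd⟩ := (ore_adj_inr_inl H₁ H₂ z x₂ y₂ s v p).mp hν
        refine ⟨z, hvz.symm, ?_⟩
        have : tv = p := by
          rcases hd with ⟨hs, rfl⟩ | ⟨hs, rfl⟩ <;> simp [htv, hs]
        simp [hc₁, this]
  obtain ⟨α, β, hα, hβ, hne⟩ := hc
  obtain ⟨a', ha', hca'⟩ := toH1 α hα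
  obtain ⟨b', hb', hcb'⟩ := toH1 β hβ
  obtain ⟨φ₁, hp₁, hv₁⟩ := g₁.2.2.2 v.1 c₁
    ⟨a', b', ha', hb', by rw [hca', hcb']; exact hne⟩
  obtain ⟨ψ, hψ, hψx, hψy⟩ := psi_common g₂ hxy (φ₁ z)
  refine ⟨Sum.elim (fun p => φ₁ p.1) ψ, ?_, ?_⟩
  · have cross : ∀ (p : {v : V₁ // v ≠ z}) (t : V₂), p ≠ v →
        (oreSumGraph H₁ H₂ z x₂ y₂ s).Adj (Sum.inl p) (Sum.inr t) → φ₁ p.1 ≠ ψ t := by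
      intro p t hpv hadj
      obtain ⟨hpz, hd⟩ := (ore_adj_inl_inr H₁ H₂ z x₂ y₂ s p t).mp hadj
      have ht : ψ t = φ₁ z := by
        rcases hd with ⟨_, rfl⟩ | ⟨_, rfl⟩
        · exact hψx
        · exact hψy
      rw [ht]
      exact hp₁ p.1 z (fun h => hpv (Subtype.ext h)) (Ne.symm v.2) hpz
    intro p q hp hq hpq
    cases p with
    | inl p' =>
        cases q with
        | inl q' =>
            have h' := (ore_adj_inl_inl H₁ H₂ z x₂ y₂ s p' q').mp hpq
            exact hp₁ p'.1 q'.1 (fun h => hp (congrArg Sum.inl (Subtype.ext h)))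
              (fun h => hq (congrArg Sum.inl (Subtype.ext h))) h'
        | inr t => exact cross p' t (fun h => hp (congrArg Sum.inl h)) hpq
    | inr t =>
        cases q with
        | inl q' => exact (cross q' t (fun h => hq (congrArg Sum.inl h)) hpq.symm).symm
        | inr t' =>
            obtain ⟨h', hn1, hn2⟩ := (ore_adj_inr_inr H₁ H₂ z x₂ y₂ s t t').mp hpq
            exact hψ t t' h' hn1 hn2
  · intro w hw
    cases w with
    | inl u =>
        have h' := (ore_adj_inl_inl H₁ H₂ z x₂ y₂ s u v).mp hw
        have := hv₁ u.1 h'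
        simpa [hc₁, u.2] using this
    | inr t =>
        obtain ⟨hvz, hd⟩ := (ore_adj_inr_inl H₁ H₂ z x₂ y₂ s v t).mp hw
        have htv' : tv = t := by
          rcases hd with ⟨hs, rfl⟩ | ⟨hs, rfl⟩ <;> simp [htv, hs]
        have hzv := hv₁ z hvz.symm
        have hψt : ψ t = φ₁ z := by
          rcases hd with ⟨_, rfl⟩ | ⟨_, rfl⟩
          · exact hψx
          · exact hψy
        simp only [Sum.elim_inr, hψt]
        rw [show c (Sum.inr t) = c₁ z by simp [hc₁, htv']]
        exact hzv

/-- property (C) at an `H₂`-side vertex other than `x₂`, `y₂` -/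
lemma ore_C_inr_generic (g₁ : Good H₁) (g₂ : Good H₂) (hxy : H₂.Adj x₂ y₂)
    (hwt : ∃ w, H₁.Adj w z ∧ s w = true) (hwf : ∃ w, H₁.Adj w z ∧ s w = false)
    (w : V₂) (hwx : w ≠ x₂) (hwy : w ≠ y₂) (c : ({v : V₁ // v ≠ z} ⊕ V₂) → Fin 3)
    (hc : ∃ α β, (oreSumGraph H₁ H₂ z x₂ y₂ s).Adj α (Sum.inr w) ∧
      (oreSumGraph H₁ H₂ z x₂ y₂ s).Adj β (Sum.inr w) ∧ c α ≠ c β) :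
    ∃ φ : ({v : V₁ // v ≠ z} ⊕ V₂) → Fin 3,
      (∀ p q, p ≠ Sum.inr w → q ≠ Sum.inr w →
        (oreSumGraph H₁ H₂ z x₂ y₂ s).Adj p q → φ p ≠ φ q) ∧
      ∀ ν, (oreSumGraph H₁ H₂ z x₂ y₂ s).Adj ν (Sum.inr w) → φ ν ≠ c ν := by
  classical
  have toH2 : ∀ ν, (oreSumGraph H₁ H₂ z x₂ y₂ s).Adj ν (Sum.inr w) →
      ∃ p, H₂.Adj p w ∧ ν = Sum.inr p := by
    intro ν hν
    cases ν with
    | inl u =>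
        obtain ⟨-, hd⟩ := (ore_adj_inl_inr H₁ H₂ z x₂ y₂ s u w).mp hν
        rcases hd with ⟨-, rfl⟩ | ⟨-, rfl⟩
        · exact absurd rfl hwx
        · exact absurd rfl hwy
    | inr p =>
        obtain ⟨h', -, -⟩ := (ore_adj_inr_inr H₁ H₂ z x₂ y₂ s p w).mp hν
        exact ⟨p, h', rfl⟩
  obtain ⟨α, β, hα, hβ, hne⟩ := hc
  obtain ⟨pα, hpα, rfl⟩ := toH2 α hα
  obtain ⟨pβ, hpβ, rfl⟩ := toH2 β hβ
  obtain ⟨ψ, hp₂, hv₂⟩ := g₂.2.2.2 w (fun u => c (Sum.inr u)) ⟨pα, pβ, hpα, hpβ, hne⟩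
  have hxyψ : ψ x₂ ≠ ψ y₂ := hp₂ x₂ y₂ hwx.symm hwy.symm hxy
  obtain ⟨φ₁, hp₁, hv₁⟩ := g₁.2.2.2 z (fun u => if s u then ψ x₂ else ψ y₂) (by
    obtain ⟨wt, hwt1, hwt2⟩ := hwt
    obtain ⟨wf, hwf1, hwf2⟩ := hwf
    exact ⟨wt, wf, hwt1, hwf1, by simp [hwt2, hwf2, hxyψ]⟩)
  refine ⟨Sum.elim (fun p => φ₁ p.1) ψ, ?_, ?_⟩
  · have cross : ∀ (p : {v : V₁ // v ≠ z}) (t : V₂),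
        (oreSumGraph H₁ H₂ z x₂ y₂ s).Adj (Sum.inl p) (Sum.inr t) → φ₁ p.1 ≠ ψ t := by
      intro p t hadj
      obtain ⟨hpz, hd⟩ := (ore_adj_inl_inr H₁ H₂ z x₂ y₂ s p t).mp hadj
      have := hv₁ p.1 hpz
      rcases hd with ⟨hs, rfl⟩ | ⟨hs, rfl⟩ <;> simpa [hs] using this
    intro p q hp hq hpq
    cases p with
    | inl p' =>
        cases q with
        | inl q' =>
            exact hp₁ p'.1 q'.1 p'.2 q'.2 ((ore_adj_inl_inl H₁ H₂ z x₂ y₂ s p' q').mp hpq)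
        | inr t => exact cross p' t hpq
    | inr t =>
        cases q with
        | inl q' => exact (cross q' t hpq.symm).symm
        | inr t' =>
            obtain ⟨h', -, -⟩ := (ore_adj_inr_inr H₁ H₂ z x₂ y₂ s t t').mp hpq
            exact hp₂ t t' (fun h => hp (congrArg Sum.inr h))
              (fun h => hq (congrArg Sum.inr h)) h'
  · intro ν hν
    obtain ⟨p, hpw, rfl⟩ := toH2 ν hν
    exact hv₂ p hpw

/-- property (C) at `x₂` -/
lemma ore_C_at_x2 (g₁ : Good H₁) (g₂ : Good H₂) (hxy : H₂.Adj x₂ y₂)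
    (hwt : ∃ w, H₁.Adj w z ∧ s w = true) (hwf : ∃ w, H₁.Adj w z ∧ s w = false)
    (hu₀ : ∃ u, H₂.Adj u x₂ ∧ u ≠ y₂) (c : ({v : V₁ // v ≠ z} ⊕ V₂) → Fin 3)
    (hc : ∃ α β, (oreSumGraph H₁ H₂ z x₂ y₂ s).Adj α (Sum.inr x₂) ∧
      (oreSumGraph H₁ H₂ z x₂ y₂ s).Adj β (Sum.inr x₂) ∧ c α ≠ c β) :
    ∃ φ : ({v : V₁ // v ≠ z} ⊕ V₂) → Fin 3,
      (∀ p q, p ≠ Sum.inr x₂ → q ≠ Sum.inr x₂ →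
        (oreSumGraph H₁ H₂ z x₂ y₂ s).Adj p q → φ p ≠ φ q) ∧
      ∀ ν, (oreSumGraph H₁ H₂ z x₂ y₂ s).Adj ν (Sum.inr x₂) → φ ν ≠ c ν := by
  classical
  obtain ⟨u₀, hu₀x, hu₀y⟩ := hu₀
  -- adjacency to `inr x₂` from the left forces `s = true`
  have adjL : ∀ (a : {v : V₁ // v ≠ z}),
      (oreSumGraph H₁ H₂ z x₂ y₂ s).Adj (Sum.inl a) (Sum.inr x₂) →
      H₁.Adj a.1 z ∧ s a.1 = true := by
    intro a ha
    obtain ⟨h1, hd⟩ := (ore_adj_inl_inr H₁ H₂ z x₂ y₂ s a x₂).mp ha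
    rcases hd with ⟨hs, -⟩ | ⟨-, hx⟩
    · exact ⟨h1, hs⟩
    · exact absurd hx hxy.ne
  have adjR : ∀ (p : V₂),
      (oreSumGraph H₁ H₂ z x₂ y₂ s).Adj (Sum.inr p) (Sum.inr x₂) →
      H₂.Adj p x₂ ∧ p ≠ y₂ := by
    intro p hp
    obtain ⟨h1, -, hn2⟩ := (ore_adj_inr_inr H₁ H₂ z x₂ y₂ s p x₂).mp hp
    exact ⟨h1, fun h => hn2 ⟨h, rfl⟩⟩
  obtain ⟨t, ht, hnc₂⟩ : ∃ t : Fin 3,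
      (∃ w, ∃ hw : H₁.Adj w z, s w = true ∧ c (Sum.inl ⟨w, hw.ne⟩) = t) ∧
      (∃ p q, H₂.Adj p x₂ ∧ H₂.Adj q x₂ ∧
        (if p = y₂ then t else c (Sum.inr p)) ≠ (if q = y₂ then t else c (Sum.inr q))) := by
    by_cases hA : ∃ w, ∃ hw : H₁.Adj w z, s w = true ∧
        c (Sum.inl ⟨w, hw.ne⟩) ≠ c (Sum.inr u₀)
    · obtain ⟨w, hw, hs, hcw⟩ := hA
      refine ⟨c (Sum.inl ⟨w, hw.ne⟩), ⟨w, hw, hs, rfl⟩, y₂, u₀, hxy.symm, hu₀x, ?_⟩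
      rw [if_pos rfl, if_neg hu₀y]
      exact hcw
    · push_neg at hA
      obtain ⟨α, β, hα, hβ, hne⟩ := hc
      have key : ∀ ν, (oreSumGraph H₁ H₂ z x₂ y₂ s).Adj ν (Sum.inr x₂) →
          c ν ≠ c (Sum.inr u₀) → ∃ p, H₂.Adj p x₂ ∧ p ≠ y₂ ∧ c (Sum.inr p) ≠ c (Sum.inr u₀) := by
        intro ν hν hcν
        cases ν with
        | inl a =>
            obtain ⟨h1, hs⟩ := adjL a hν
            exact absurd (hA a.1 h1 hs) (by
              have : c (Sum.inl ⟨a.1, h1.ne⟩) = c (Sum.inl a) := rfl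
              rw [this]; exact hcν)
        | inr p =>
            obtain ⟨h1, h2⟩ := adjR p hν
            exact ⟨p, h1, h2, hcν⟩
      obtain ⟨w, hw, hs⟩ := hwt
      refine ⟨c (Sum.inr u₀), ⟨w, hw, hs, hA w hw hs⟩, ?_⟩
      by_cases hcα : c α = c (Sum.inr u₀)
      · obtain ⟨p, h1, h2, h3⟩ := key β hβ (by rw [← hcα]; exact hne.symm)
        exact ⟨p, u₀, h1, hu₀x, by rw [if_neg h2, if_neg hu₀y]; exact h3⟩
      · obtain ⟨p, h1, h2, h3⟩ := key α hα hcα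
        exact ⟨p, u₀, h1, hu₀x, by rw [if_neg h2, if_neg hu₀y]; exact h3⟩
  set c₂ : V₂ → Fin 3 := fun u => if u = y₂ then t else c (Sum.inr u) with hc₂
  obtain ⟨ψ, hp₂, hv₂⟩ := g₂.2.2.2 x₂ c₂ hnc₂
  have hψy : ψ y₂ ≠ t := by
    have := hv₂ y₂ hxy.symm
    simpa [hc₂] using this
  set c₁ : V₁ → Fin 3 := fun u =>
    if hu : u = z then 0 else if s u then c (Sum.inl ⟨u, hu⟩) else ψ y₂ with hc₁
  have hnc₁ : ∃ a b, H₁.Adj a z ∧ H₁.Adj b z ∧ c₁ a ≠ c₁ b := by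
    obtain ⟨wf, hwf1, hwf2⟩ := hwf
    by_cases hT : ∃ w1, ∃ h1 : H₁.Adj w1 z, ∃ w2, ∃ h2 : H₁.Adj w2 z,
        s w1 = true ∧ s w2 = true ∧ c (Sum.inl ⟨w1, h1.ne⟩) ≠ c (Sum.inl ⟨w2, h2.ne⟩)
    · obtain ⟨w1, h1, w2, h2, hs1, hs2, hne'⟩ := hT
      exact ⟨w1, w2, h1, h2, by simpa [hc₁, h1.ne, h2.ne, hs1, hs2] using hne'⟩
    · push_neg at hT
      obtain ⟨wT, hwT, hsT, hcT⟩ := ht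
      refine ⟨wT, wf, hwT, hwf1, ?_⟩
      have e1 : c₁ wT = t := by simp [hc₁, hwT.ne, hsT, hcT]
      have e2 : c₁ wf = ψ y₂ := by simp [hc₁, hwf1.ne, hwf2]
      rw [e1, e2]
      exact fun h => hψy h.symm
  obtain ⟨φ₁, hp₁, hv₁⟩ := g₁.2.2.2 z c₁ hnc₁
  refine ⟨Sum.elim (fun p => φ₁ p.1) ψ, ?_, ?_⟩
  · have cross : ∀ (p : {v : V₁ // v ≠ z}) (t' : V₂), t' ≠ x₂ →
        (oreSumGraph H₁ H₂ z x₂ y₂ s).Adj (Sum.inl p) (Sum.inr t') → φ₁ p.1 ≠ ψ t' := by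
      intro p t' ht' hadj
      obtain ⟨hpz, hd⟩ := (ore_adj_inl_inr H₁ H₂ z x₂ y₂ s p t').mp hadj
      rcases hd with ⟨-, rfl⟩ | ⟨hs, rfl⟩
      · exact absurd rfl ht'
      · have := hv₁ p.1 hpz
        simpa [hc₁, p.2, hs] using this
    intro p q hp hq hpq
    cases p with
    | inl p' =>
        cases q with
        | inl q' =>
            exact hp₁ p'.1 q'.1 p'.2 q'.2 ((ore_adj_inl_inl H₁ H₂ z x₂ y₂ s p' q').mp hpq)
        | inr t' => exact cross p' t' (fun h => hq (congrArg Sum.inr h)) hpq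
    | inr t' =>
        cases q with
        | inl q' => exact (cross q' t' (fun h => hp (congrArg Sum.inr h)) hpq.symm).symm
        | inr t'' =>
            obtain ⟨h', -, -⟩ := (ore_adj_inr_inr H₁ H₂ z x₂ y₂ s t' t'').mp hpq
            exact hp₂ t' t'' (fun h => hp (congrArg Sum.inr h))
              (fun h => hq (congrArg Sum.inr h)) h'
  · intro ν hν
    cases ν with
    | inl a =>
        obtain ⟨h1, hs⟩ := adjL a hν
        have := hv₁ a.1 h1
        simpa [hc₁, a.2, hs] using this
    | inr p =>
        obtain ⟨h1, h2⟩ := adjR p hν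
        have := hv₂ p h1
        simpa [hc₂, h2] using this

lemma ore_clause_C [Fintype V₂] (g₁ : Good H₁) (g₂ : Good H₂) (t2 : TwoConnected H₂)
    (hxy : H₂.Adj x₂ y₂)
    (hwt : ∃ w, H₁.Adj w z ∧ s w = true) (hwf : ∃ w, H₁.Adj w z ∧ s w = false) :
    ∀ (ζ : {v : V₁ // v ≠ z} ⊕ V₂) (c : ({v : V₁ // v ≠ z} ⊕ V₂) → Fin 3),
      (∃ α β, (oreSumGraph H₁ H₂ z x₂ y₂ s).Adj α ζ ∧
        (oreSumGraph H₁ H₂ z x₂ y₂ s).Adj β ζ ∧ c α ≠ c β) →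
      ∃ φ : ({v : V₁ // v ≠ z} ⊕ V₂) → Fin 3,
        (∀ p q, p ≠ ζ → q ≠ ζ → (oreSumGraph H₁ H₂ z x₂ y₂ s).Adj p q → φ p ≠ φ q) ∧
        ∀ ν, (oreSumGraph H₁ H₂ z x₂ y₂ s).Adj ν ζ → φ ν ≠ c ν := by
  classical
  intro ζ c hc
  cases ζ with
  | inl v => exact ore_C_inl g₁ g₂ hxy v c hc
  | inr w =>
      by_cases hwx : w = x₂
      · rw [hwx] at hc ⊢
        exact ore_C_at_x2 g₁ g₂ hxy hwt hwf (two_conn_other t2 hxy) c hc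
      · by_cases hwy : w = y₂
        · rw [hwy] at hc ⊢
          rw [oreSum_swap H₁ H₂ z x₂ y₂ s] at hc ⊢
          refine ore_C_at_x2 g₁ g₂ hxy.symm ?_ ?_ (two_conn_other t2 hxy.symm) c hc
          · obtain ⟨w', h1, h2⟩ := hwf
            exact ⟨w', h1, by simp [h2]⟩
          · obtain ⟨w', h1, h2⟩ := hwt
            exact ⟨w', h1, by simp [h2]⟩
        · exact ore_C_inr_generic g₁ g₂ hxy hwt hwf w hwx hwy c hc

lemma good_oreSum [Fintype V₂] (g₁ : Good H₁) (g₂ : Good H₂) (t2 : TwoConnected H₂)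
    (hxy : H₂.Adj x₂ y₂)
    (hwt : ∃ w, H₁.Adj w z ∧ s w = true) (hwf : ∃ w, H₁.Adj w z ∧ s w = false) :
    Good (oreSumGraph H₁ H₂ z x₂ y₂ s) :=
  ⟨ore_clause_a g₁ g₂, ore_clause_b g₁ g₂ hxy hwt hwf,
    ore_clause_d g₁ g₂ hxy hwt hwf, ore_clause_C g₁ g₂ t2 hxy hwt hwf⟩

end Main

set_option maxRecDepth 100000 in
lemma k4_C : ∀ (z : Fin 4) (c : Fin 4 → Fin 3),
    (∃ a b : Fin 4, a ≠ z ∧ b ≠ z ∧ c a ≠ c b) →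
    ∃ φ : Fin 4 → Fin 3, (∀ a b : Fin 4, a ≠ z ∧ b ≠ z ∧ a ≠ b → φ a ≠ φ b) ∧
      ∀ w : Fin 4, w ≠ z → φ w ≠ c w := by decide

set_option maxRecDepth 100000 in
lemma good_k4 : Good (⊤ : SimpleGraph (Fin 4)) := by
  refine ⟨by decide, by decide, by decide, ?_⟩
  intro z c hc
  obtain ⟨a, b, haz, hbz, hab⟩ := hc
  obtain ⟨φ, hφ, hav⟩ := k4_C z c ⟨a, b, haz.ne, hbz.ne, hab⟩
  exact ⟨φ, fun a b ha hb hadj => hφ a b ⟨ha, hb, hadj.ne⟩,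
    fun w hw => hav w hw.ne⟩

lemma good_of_iso {V W : Type} {G : SimpleGraph V} {G' : SimpleGraph W}
    (e : G ≃g G') (h : Good G') : Good G := by
  obtain ⟨h1, h2, h3, h4⟩ := h
  refine ⟨?_, ?_, ?_, ?_⟩
  · rintro ⟨φ, hφ⟩
    exact h1 ⟨φ ∘ e.symm, fun a b hab => hφ _ _ (by
      have := e.symm.map_adj_iff.mpr hab; simpa using this)⟩
  · intro u v huv
    obtain ⟨φ, hφ⟩ := h2 (e u) (e v) (e.map_adj_iff.mpr huv)
    refine ⟨φ ∘ e, fun a b hab hn1 hn2 => hφ _ _ (e.map_adj_iff.mpr hab) ?_ ?_⟩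
    · rintro ⟨ha, hb⟩; exact hn1 ⟨e.injective ha, e.injective hb⟩
    · rintro ⟨ha, hb⟩; exact hn2 ⟨e.injective ha, e.injective hb⟩
  · intro v
    obtain ⟨u, hu⟩ := h3 (e v)
    refine ⟨e.symm u, ?_⟩
    have := e.symm.map_adj_iff.mpr hu
    simpa using this
  · intro z c hc
    obtain ⟨a, b, haz, hbz, hab⟩ := hc
    obtain ⟨φ, hφ, hav⟩ := h4 (e z) (c ∘ e.symm)
      ⟨e a, e b, e.map_adj_iff.mpr haz, e.map_adj_iff.mpr hbz, by simpa using hab⟩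
    refine ⟨φ ∘ e, fun a b ha hb hab => hφ _ _ (fun hh => ha (e.injective hh))
      (fun hh => hb (e.injective hh)) (e.map_adj_iff.mpr hab), fun w hw => ?_⟩
    have := hav (e w) (e.map_adj_iff.mpr hw)
    simpa using this

lemma not_colorable_three {V : Type} {G : SimpleGraph V}
    (h : ¬ ∃ φ : V → Fin 3, ∀ a b, G.Adj a b → φ a ≠ φ b) : ¬ G.Colorable 3 := by
  rintro ⟨C⟩
  exact h ⟨C, fun a b hab => C.valid hab⟩

lemma good_colorable_four {V : Type} [Fintype V] {G : SimpleGraph V} (g : Good G) :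
    G.Colorable 4 := by
  classical
  have hne : Nonempty V := by
    by_contra h
    rw [not_nonempty_iff] at h
    exact g.1 ⟨fun _ => 0, fun a b hab => (IsEmpty.false a).elim⟩
  obtain ⟨v⟩ := hne
  obtain ⟨u, hu⟩ := g.2.2.1 v
  obtain ⟨φ, hφ⟩ := g.2.1 u v hu
  have key : ∀ w, w ≠ v → (if w = v then (3 : Fin 4) else (φ w).castLE (by norm_num)) ≠ 3 := by
    intro w hw
    rw [if_neg hw]
    intro hcon
    have h1 := congrArg Fin.val hcon
    rw [Fin.coe_castLE, show ((3 : Fin 4) : ℕ) = 3 from rfl] at h1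
    have h2 := (φ w).isLt
    omega
  refine ⟨SimpleGraph.Coloring.mk
    (fun w => if w = v then (3 : Fin 4) else (φ w).castLE (by norm_num)) ?_⟩
  intro a b hab
  by_cases ha : a = v
  · subst ha
    rw [if_pos rfl]
    exact fun hcon => key b hab.ne' hcon.symm
  · by_cases hb : b = v
    · subst hb
      rw [if_pos rfl]
      exact key a ha
    · rw [if_neg ha, if_neg hb]
      have hab' := hφ a b hab (fun h => hb h.2) (fun h => ha h.1)
      intro hcon
      exact hab' (Fin.castLE_injective (by norm_num) hcon)

lemma good_fourCritical {V : Type} [Fintype V] {G : SimpleGraph V} (g : Good G) :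
    FourCritical G := by
  classical
  constructor
  · have h4 : G.chromaticNumber ≤ (4 : ℕ) :=
      SimpleGraph.chromaticNumber_le_iff_colorable.mpr (good_colorable_four g)
    have h3 : ¬ G.chromaticNumber ≤ (3 : ℕ) := fun h =>
      not_colorable_three g.1 (SimpleGraph.chromaticNumber_le_iff_colorable.mp h)
    have hlt : ((3 : ℕ) : ℕ∞) < G.chromaticNumber := lt_of_not_ge h3
    have hge : ((4 : ℕ) : ℕ∞) ≤ G.chromaticNumber := by
      have := Order.add_one_le_of_lt hlt
      calc ((4 : ℕ) : ℕ∞) = ((3 : ℕ) : ℕ∞) + 1 := by norm_num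
        _ ≤ G.chromaticNumber := this
    have : G.chromaticNumber = ((4 : ℕ) : ℕ∞) := le_antisymm h4 hge
    rw [this]; norm_num
  · intro H' hne
    have hmiss : ∃ u v, G.Adj u v ∧ ¬ H'.Adj u v := by
      by_contra h
      push_neg at h
      apply hne
      apply SimpleGraph.Subgraph.ext
      · apply Set.eq_univ_of_forall
        intro v
        obtain ⟨u, hu⟩ := g.2.2.1 v
        exact (h u v hu).snd_mem
      · ext a b
        exact ⟨fun hab => hab.adj_sub, fun hab => h a b hab⟩
    obtain ⟨u, v, huv, hnadj⟩ := hmiss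
    obtain ⟨φ, hφ⟩ := g.2.1 u v huv
    refine ⟨SimpleGraph.Coloring.mk (fun w => φ w.1) ?_⟩
    intro a b hab
    have hab' : H'.Adj a.1 b.1 := hab
    refine hφ a.1 b.1 (hab'.adj_sub) ?_ ?_
    · rintro ⟨h1, h2⟩
      rw [h1, h2] at hab'
      exact hnadj hab'
    · rintro ⟨h1, h2⟩
      rw [h1, h2] at hab'
      exact hnadj hab'.symm

lemma isFourOre_good {V : Type} [Fintype V] [DecidableEq V] {G : SimpleGraph V}
    (h : IsFourOre V G) : Good G := by
  induction h with
  | k4 V G h => exact good_of_iso h.some good_k4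
  | ore V₁ V₂ W H₁ H₂ H h₁ h₂ h ih₁ ih₂ =>
      obtain ⟨t1, t2, z, x₂, y₂, s, hxy, hwt, hwf, ⟨e⟩⟩ := h
      exact good_of_iso e (good_oreSum ih₁ ih₂ t2 hxy hwt hwf)


/-- Every 4-Ore graph is 4-critical. -/
theorem four_ore_is_four_critical (V : Type) [Fintype V] [DecidableEq V]
    (G : SimpleGraph V) (hG : IsFourOre V G) :
    FourCritical G := good_fourCritical (isFourOre_good hG)
end

section
/- Every 4-Ore graph H satisfies 3|E(H)| = 5|V(H)| − 2. -/
open scoped Classical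

section OreAux


variable {V₁ V₂ : Type}

/-- Forward map on unordered pairs. -/
noncomputable def oreF (z : V₁) : Sym2 ({v : V₁ // v ≠ z} ⊕ V₂) → Sym2 V₁ ⊕ Sym2 V₂ :=
  Sym2.lift ⟨fun a b =>
    match a, b with
    | Sum.inl a, Sum.inl b => Sum.inl s(a.1, b.1)
    | Sum.inl a, Sum.inr _ => Sum.inl s(a.1, z)
    | Sum.inr _, Sum.inl b => Sum.inl s(b.1, z)
    | Sum.inr a, Sum.inr b => Sum.inr s(a, b),
    by rintro (a | a) (b | b) <;> simp [Sym2.eq_swap]⟩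

noncomputable def oreP (z : V₁) (x₂ y₂ : V₂) (s : V₁ → Bool) (other this : V₁) :
    {v : V₁ // v ≠ z} ⊕ V₂ :=
  if h : this = z then Sum.inr (if s other then x₂ else y₂) else Sum.inl ⟨this, h⟩

/-- Inverse map on unordered pairs. -/
noncomputable def oreF' (z : V₁) (x₂ y₂ : V₂) (s : V₁ → Bool) :
    Sym2 V₁ ⊕ Sym2 V₂ → Sym2 ({v : V₁ // v ≠ z} ⊕ V₂)
  | Sum.inl e =>
      Sym2.lift ⟨fun u v => s(oreP z x₂ y₂ s v u, oreP z x₂ y₂ s u v),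
        fun _ _ => Sym2.eq_swap⟩ e
  | Sum.inr e => e.map Sum.inr

@[simp] lemma oreF_ll (z : V₁) (a b : {v : V₁ // v ≠ z}) :
    oreF (V₂ := V₂) z s(Sum.inl a, Sum.inl b) = Sum.inl s(a.1, b.1) := rfl
@[simp] lemma oreF_lr (z : V₁) (a : {v : V₁ // v ≠ z}) (b : V₂) :
    oreF z s(Sum.inl a, Sum.inr b) = Sum.inl s(a.1, z) := rfl
@[simp] lemma oreF_rl (z : V₁) (a : V₂) (b : {v : V₁ // v ≠ z}) :
    oreF z s(Sum.inr a, Sum.inl b) = Sum.inl s(b.1, z) := rfl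
@[simp] lemma oreF_rr (z : V₁) (a b : V₂) :
    oreF z s(Sum.inr a, Sum.inr b) = Sum.inr s(a, b) := rfl


lemma oreSum_edge_card [Fintype V₁] [Fintype V₂]
    (H₁ : SimpleGraph V₁) (H₂ : SimpleGraph V₂) (z : V₁) (x₂ y₂ : V₂) (s : V₁ → Bool)
    (hxy : H₂.Adj x₂ y₂) :
    Nat.card (oreSumGraph H₁ H₂ z x₂ y₂ s).edgeSet + 1 =
      Nat.card H₁.edgeSet + Nat.card H₂.edgeSet := by
  classical
  set G := oreSumGraph H₁ H₂ z x₂ y₂ s with hG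
  have hxyne : x₂ ≠ y₂ := hxy.ne
  have key : G.edgeFinset.card =
      (H₁.edgeFinset.disjSum ((H₂.edgeFinset).erase s(x₂, y₂))).card := by
    apply Finset.card_bij' (fun e _ => oreF z e) (fun e _ => oreF' z x₂ y₂ s e)
    · -- forward maps into target
      intro e he
      rw [SimpleGraph.mem_edgeFinset] at he
      induction e using Sym2.ind with
      | _ a b =>
        rw [SimpleGraph.mem_edgeSet, hG, oreSumGraph, SimpleGraph.fromRel_adj] at he
        obtain ⟨hne, hr⟩ := he
        rcases a with a | a <;> rcases b with b | b
        · simp only [oreF_ll, Finset.inl_mem_disjSum, SimpleGraph.mem_edgeFinset,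
            SimpleGraph.mem_edgeSet]
          rcases hr with h | h
          · exact h
          · exact h.symm
        · simp only [oreF_lr, Finset.inl_mem_disjSum, SimpleGraph.mem_edgeFinset,
            SimpleGraph.mem_edgeSet]
          rcases hr with h | h
          · exact h.1
          · exact h.elim
        · simp only [oreF_rl, Finset.inl_mem_disjSum, SimpleGraph.mem_edgeFinset,
            SimpleGraph.mem_edgeSet]
          rcases hr with h | h
          · exact h.elim
          · exact h.1
        · have h : H₂.Adj a b ∧ ¬(a = x₂ ∧ b = y₂) ∧ ¬(a = y₂ ∧ b = x₂) := by
            rcases hr with h | h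
            · exact h
            · exact ⟨h.1.symm, fun hc => h.2.2 ⟨hc.2, hc.1⟩, fun hc => h.2.1 ⟨hc.2, hc.1⟩⟩
          simp only [oreF_rr, Finset.inr_mem_disjSum, Finset.mem_erase,
            SimpleGraph.mem_edgeFinset, SimpleGraph.mem_edgeSet]
          refine ⟨?_, h.1⟩
          rw [Ne, Sym2.eq_iff]
          rintro (⟨h1, h2⟩ | ⟨h1, h2⟩)
          · exact h.2.1 ⟨h1, h2⟩
          · exact h.2.2 ⟨h1, h2⟩
    · -- backward maps into source
      rintro (e | e) he
      · rw [Finset.inl_mem_disjSum, SimpleGraph.mem_edgeFinset] at he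
        induction e using Sym2.ind with
        | _ u v =>
          rw [SimpleGraph.mem_edgeSet] at he
          show s(oreP z x₂ y₂ s v u, oreP z x₂ y₂ s u v) ∈ G.edgeFinset
          rw [SimpleGraph.mem_edgeFinset, SimpleGraph.mem_edgeSet, hG, oreSumGraph,
            SimpleGraph.fromRel_adj]
          by_cases hu : u = z
          · have hv : v ≠ z := fun hvz => H₁.irrefl (by rw [hu, hvz] at he; exact he)
            rw [oreP, oreP, dif_neg hv, dif_pos hu]
            rw [hu] at he
            constructor
            · simp
            · right
              refine ⟨he.symm, ?_⟩
              cases hsv : s v <;> simp [hsv]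
          · by_cases hv : v = z
            · subst hv
              rw [oreP, oreP, dif_neg hu, dif_pos rfl]
              constructor
              · simp
              · left
                refine ⟨he, ?_⟩
                cases hsu : s u <;> simp [hsu]
            · rw [oreP, oreP, dif_neg hu, dif_neg hv]
              refine ⟨?_, Or.inl he⟩
              simp only [ne_eq, Sum.inl.injEq, Subtype.mk.injEq]
              exact he.ne
      · rw [Finset.inr_mem_disjSum, Finset.mem_erase, SimpleGraph.mem_edgeFinset] at he
        obtain ⟨hne, he⟩ := he
        induction e using Sym2.ind with
        | _ a b =>
          rw [SimpleGraph.mem_edgeSet] at he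
          show Sym2.map Sum.inr s(a, b) ∈ G.edgeFinset
          rw [Sym2.map_pair_eq, SimpleGraph.mem_edgeFinset, SimpleGraph.mem_edgeSet, hG,
            oreSumGraph, SimpleGraph.fromRel_adj]
          rw [Ne, Sym2.eq_iff] at hne
          push_neg at hne
          constructor
          · simpa using he.ne
          · left
            refine ⟨he, ?_, ?_⟩
            · rintro ⟨h1, h2⟩; exact (hne.1 h1) h2
            · rintro ⟨h1, h2⟩
              exact (hne.2 h1) h2
    · -- left inverse
      intro e he
      rw [SimpleGraph.mem_edgeFinset] at he
      induction e using Sym2.ind with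
      | _ a b =>
        rw [SimpleGraph.mem_edgeSet, hG, oreSumGraph, SimpleGraph.fromRel_adj] at he
        obtain ⟨hne, hr⟩ := he
        rcases a with a | a <;> rcases b with b | b
        · show oreF' z x₂ y₂ s (Sum.inl s(a.1, b.1)) = _
          show s(oreP z x₂ y₂ s b.1 a.1, oreP z x₂ y₂ s a.1 b.1) = _
          rw [oreP, oreP, dif_neg a.2, dif_neg b.2]
        · have h : H₁.Adj a.1 z ∧ ((s a.1 = true ∧ b = x₂) ∨ (s a.1 = false ∧ b = y₂)) := by
            rcases hr with h | h
            · exact h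
            · exact h.elim
          show oreF' z x₂ y₂ s (Sum.inl s(a.1, z)) = _
          show s(oreP z x₂ y₂ s z a.1, oreP z x₂ y₂ s a.1 z) = _
          rw [oreP, oreP, dif_neg a.2, dif_pos rfl]
          congr 1
          rcases h.2 with ⟨h1, h2⟩ | ⟨h1, h2⟩ <;> simp [h1, h2]
        · have h : H₁.Adj b.1 z ∧ ((s b.1 = true ∧ a = x₂) ∨ (s b.1 = false ∧ a = y₂)) := by
            rcases hr with h | h
            · exact h.elim
            · exact h
          show oreF' z x₂ y₂ s (Sum.inl s(b.1, z)) = _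
          show s(oreP z x₂ y₂ s z b.1, oreP z x₂ y₂ s b.1 z) = _
          rw [oreP, oreP, dif_neg b.2, dif_pos rfl]
          rw [Sym2.eq_swap]
          congr 1
          rcases h.2 with ⟨h1, h2⟩ | ⟨h1, h2⟩ <;> simp [h1, h2]
        · show oreF' z x₂ y₂ s (Sum.inr s(a, b)) = _
          show Sym2.map Sum.inr s(a, b) = _
          rw [Sym2.map_pair_eq]
    · -- right inverse
      rintro (e | e) he
      · rw [Finset.inl_mem_disjSum, SimpleGraph.mem_edgeFinset] at he
        induction e using Sym2.ind with
        | _ u v =>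
          rw [SimpleGraph.mem_edgeSet] at he
          show oreF z s(oreP z x₂ y₂ s v u, oreP z x₂ y₂ s u v) = _
          by_cases hu : u = z
          · have hv : v ≠ z := fun hvz => H₁.irrefl (by rw [hu, hvz] at he; exact he)
            rw [oreP, oreP, dif_neg hv, dif_pos hu, oreF_rl, hu, Sym2.eq_swap]
          · by_cases hv : v = z
            · subst hv
              rw [oreP, oreP, dif_neg hu, dif_pos rfl, oreF_lr]
            · rw [oreP, oreP, dif_neg hu, dif_neg hv, oreF_ll]
      · rw [Finset.inr_mem_disjSum] at he
        induction e using Sym2.ind with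
        | _ a b =>
          show oreF z (Sym2.map Sum.inr s(a, b)) = _
          rw [Sym2.map_pair_eq, oreF_rr]
  have hxym : s(x₂, y₂) ∈ H₂.edgeFinset := by
    rw [SimpleGraph.mem_edgeFinset, SimpleGraph.mem_edgeSet]; exact hxy
  rw [Finset.card_disjSum, Finset.card_erase_of_mem hxym] at key
  have hpos : 1 ≤ H₂.edgeFinset.card := Finset.card_pos.mpr ⟨_, hxym⟩
  simp only [Nat.card_eq_fintype_card, ← SimpleGraph.edgeFinset_card]
  omega

end OreAux
/-- Every 4-Ore graph `H` satisfies `3|E(H)| = 5|V(H)| − 2`. -/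
theorem four_ore_edge_count (V : Type) [Fintype V] [DecidableEq V]
    (H : SimpleGraph V) (hH : IsFourOre V H) :
    (3 * Nat.card H.edgeSet : ℤ) = 5 * Fintype.card V - 2 := by
  induction hH with
  | k4 V G h =>
    obtain ⟨e⟩ := h
    have hv : Fintype.card V = 4 := by
      rw [Fintype.card_congr e.toEquiv, Fintype.card_fin]
    have he : Nat.card G.edgeSet = 6 := by
      rw [Nat.card_congr e.mapEdgeSet, Nat.card_eq_fintype_card,
        ← SimpleGraph.edgeFinset_card, SimpleGraph.card_edgeFinset_top_eq_card_choose_two]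
      simp only [Fintype.card_fin]
      decide
    rw [he, hv]
    norm_num
  | ore V₁ V₂ W H₁ H₂ H h₁ h₂ h ih₁ ih₂ =>
    obtain ⟨t₁, t₂, z, x₂, y₂, s, hxy, -, -, ⟨e⟩⟩ := h
    have hcard := oreSum_edge_card H₁ H₂ z x₂ y₂ s hxy
    have hE : Nat.card H.edgeSet = Nat.card (oreSumGraph H₁ H₂ z x₂ y₂ s).edgeSet :=
      Nat.card_congr e.mapEdgeSet
    have hV : Fintype.card W = Fintype.card ({v : V₁ // v ≠ z} ⊕ V₂) :=
      Fintype.card_congr e.toEquiv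
    have hV₁ : Fintype.card {v : V₁ // v ≠ z} = Fintype.card V₁ - 1 := by
      have h1 : Fintype.card {v : V₁ // ¬ v = z} = Fintype.card V₁ - Fintype.card {v : V₁ // v = z} :=
        Fintype.card_subtype_compl _
      rw [Fintype.card_subtype_eq] at h1
      exact h1
    have h3 : 3 ≤ Fintype.card V₁ := t₁.1
    rw [hE, hV, Fintype.card_sum, hV₁]
    omega
end
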